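/- arXiv:2311.08945 — 7 statements merged into one kernel-verified Lean document; each statement's English description precedes it below -/
import Mathlib

section
/- For any r ≥ 0 and any x_1, …, x_n ∈ ℝ^d, one has Σ_{i=1}^n ‖𝒫_r[x_i] − (1/n) Σ_{j=1}^n 𝒫_r[x_j]‖² ≤ Σ_{i=1}^n ‖x_i − (1/n) Σ_{j=1}^n x_j‖², i.e. projecting every point onto the ball of radius r does not increase the sum of squared deviations from the mean. -/
/-!
The mean of a family minimizes the sum of squared distances to a point, so the projected
points deviate from their own mean no more than from `P` of the original mean. The projection
onto a closed convex set is nonexpansive, so each `‖P xᵢ - P m‖` is at most `‖xᵢ - m‖`.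
-/

open Finset RealInnerProductSpace

section Mean

variable {ι E : Type*} [Fintype ι] [NormedAddCommGroup E] [InnerProductSpace ℝ E]

lemma sum_sub_mean_eq_zero (y : ι → E) :
    ∑ i, (y i - (Fintype.card ι : ℝ)⁻¹ • ∑ j, y j) = 0 := by
  rcases isEmpty_or_nonempty ι with hι | hι
  · simp
  rw [sum_sub_distrib, sum_const, card_univ, ← Nat.cast_smul_eq_nsmul ℝ,
    smul_inv_smul₀ (by positivity), sub_self]

lemma sum_norm_sub_sq_eq_sum_norm_sub_mean_sq_add (y : ι → E) (c : E) :
    ∑ i, ‖y i - c‖ ^ 2 = ∑ i, ‖y i - (Fintype.card ι : ℝ)⁻¹ • ∑ j, y j‖ ^ 2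
      + Fintype.card ι * ‖(Fintype.card ι : ℝ)⁻¹ • ∑ j, y j - c‖ ^ 2 := by
  set m := (Fintype.card ι : ℝ)⁻¹ • ∑ j, y j
  have hsplit (i : ι) : ‖y i - c‖ ^ 2 = ‖y i - m‖ ^ 2 + 2 * ⟪y i - m, m - c⟫ + ‖m - c‖ ^ 2 := by
    rw [← norm_add_sq_real, sub_add_sub_cancel]
  have hzero : ∑ i, (y i - m) = 0 := sum_sub_mean_eq_zero y
  simp only [hsplit, sum_add_distrib, ← mul_sum, ← sum_inner, hzero, inner_zero_left, mul_zero,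
    add_zero, sum_const, card_univ, nsmul_eq_mul]

lemma sum_norm_sub_mean_sq_le (y : ι → E) (c : E) :
    ∑ i, ‖y i - (Fintype.card ι : ℝ)⁻¹ • ∑ j, y j‖ ^ 2 ≤ ∑ i, ‖y i - c‖ ^ 2 := by
  rw [sum_norm_sub_sq_eq_sum_norm_sub_mean_sq_add y c]
  exact le_add_of_nonneg_right (by positivity)

end Mean

section Projection

variable {E : Type*} [NormedAddCommGroup E] [InnerProductSpace ℝ E] {K : Set E}

lemma real_inner_sub_le_zero_of_norm_sub_le (hK : Convex ℝ K) {z p : E} (hp : p ∈ K)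
    (hmin : ∀ w ∈ K, ‖p - z‖ ≤ ‖w - z‖) : ∀ w ∈ K, ⟪z - p, w - p⟫ ≤ 0 := by
  have : Nonempty K := ⟨⟨p, hp⟩⟩
  refine (norm_eq_iInf_iff_real_inner_le_zero hK hp).mp (le_antisymm ?_ ?_)
  · exact le_ciInf fun w => by simpa only [norm_sub_rev z] using hmin w w.2
  · exact ciInf_le ⟨0, Set.forall_mem_range.2 fun _ => norm_nonneg _⟩ (⟨p, hp⟩ : K)

variable {P : E → E}

lemma norm_proj_sub_proj_sq_le_inner (hK : Convex ℝ K) (hP_mem : ∀ z, P z ∈ K)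
    (hP_min : ∀ z, ∀ w ∈ K, ‖P z - z‖ ≤ ‖w - z‖) (u v : E) :
    ‖P u - P v‖ ^ 2 ≤ ⟪u - v, P u - P v⟫ := by
  have hu := real_inner_sub_le_zero_of_norm_sub_le hK (hP_mem u) (hP_min u) (P v) (hP_mem v)
  have hv := real_inner_sub_le_zero_of_norm_sub_le hK (hP_mem v) (hP_min v) (P u) (hP_mem u)
  have hsplit : ⟪u - v, P u - P v⟫ - ‖P u - P v‖ ^ 2
      = -⟪u - P u, P v - P u⟫ - ⟪v - P v, P u - P v⟫ := by
    simp only [← real_inner_self_eq_norm_sq, inner_sub_left, inner_sub_right, real_inner_comm]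
    ring
  linarith

lemma norm_proj_sub_proj_le (hK : Convex ℝ K) (hP_mem : ∀ z, P z ∈ K)
    (hP_min : ∀ z, ∀ w ∈ K, ‖P z - z‖ ≤ ‖w - z‖) (u v : E) :
    ‖P u - P v‖ ≤ ‖u - v‖ := by
  have h := (norm_proj_sub_proj_sq_le_inner hK hP_mem hP_min u v).trans
    (real_inner_le_norm _ _)
  rcases (norm_nonneg (P u - P v)).eq_or_lt with h0 | h0
  · rw [← h0]; exact norm_nonneg _
  · rw [sq] at h; exact le_of_mul_le_mul_right h h0

end Projection

theorem sum_sq_dev_mean_proj_le_general {n d : ℕ} (r : ℝ)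
    (P : EuclideanSpace ℝ (Fin d) → EuclideanSpace ℝ (Fin d))
    (hP_mem : ∀ z, P z ∈ Metric.closedBall (0 : EuclideanSpace ℝ (Fin d)) r)
    (hP_min : ∀ z, ∀ w ∈ Metric.closedBall (0 : EuclideanSpace ℝ (Fin d)) r,
      ‖P z - z‖ ≤ ‖w - z‖)
    (x : Fin n → EuclideanSpace ℝ (Fin d)) :
    ∑ i, ‖P (x i) - (n : ℝ)⁻¹ • ∑ j, P (x j)‖ ^ 2
      ≤ ∑ i, ‖x i - (n : ℝ)⁻¹ • ∑ j, x j‖ ^ 2 := by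
  set m := (n : ℝ)⁻¹ • ∑ j, x j
  calc ∑ i, ‖P (x i) - (n : ℝ)⁻¹ • ∑ j, P (x j)‖ ^ 2
      ≤ ∑ i, ‖P (x i) - P m‖ ^ 2 := by
        simpa using sum_norm_sub_mean_sq_le (fun i => P (x i)) (P m)
    _ ≤ ∑ i, ‖x i - m‖ ^ 2 := by
        gcongr with i
        exact norm_proj_sub_proj_le (convex_closedBall 0 r) hP_mem hP_min _ _

/-- Projecting every point onto the closed Euclidean ball of radius `r ≥ 0`
(centered at the origin) does not increase the sum of squared deviations from the mean.
Here `P` is the Euclidean projection onto the ball, characterized as the (unique) minimizer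
of the distance to `z` over the ball. -/
theorem sum_sq_dev_mean_proj_le {n d : ℕ} (r : ℝ) (hr : 0 ≤ r)
    (P : EuclideanSpace ℝ (Fin d) → EuclideanSpace ℝ (Fin d))
    (hP_mem : ∀ z, P z ∈ Metric.closedBall (0 : EuclideanSpace ℝ (Fin d)) r)
    (hP_min : ∀ z, ∀ w ∈ Metric.closedBall (0 : EuclideanSpace ℝ (Fin d)) r,
      ‖P z - z‖ ≤ ‖w - z‖)
    (x : Fin n → EuclideanSpace ℝ (Fin d)) :
    ∑ i, ‖P (x i) - (n : ℝ)⁻¹ • ∑ j, P (x j)‖ ^ 2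
      ≤ ∑ i, ‖x i - (n : ℝ)⁻¹ • ∑ j, x j‖ ^ 2 :=
  sum_sq_dev_mean_proj_le_general r P hP_mem hP_min x
end

section
/- Let W = (w_{ij}) ∈ ℝ^{n×n} be a nonnegative, symmetric, doubly stochastic matrix with eigenvalues 1 = λ₁ > λ₂ ≥ ⋯ ≥ λ_n and ρ := max{|λ₂|, |λ_n|} < 1. Let r ≥ 0, η > 0, and let v_1, …, v_n, t_1, …, t_n ∈ ℝ^d with averages v̄ := (1/n)Σ_i v_i and t̄ := (1/n)Σ_i t_i. Define v_i⁺ := 𝒫_r[Σ_{j=1}^n w_{ij}(v_j + η t_j)] and v̄⁺ := (1/n)Σ_i v_i⁺. Then Σ_{i=1}^n ‖v_i⁺ − v̄⁺‖² ≤ ρ Σ_{i=1}^n ‖v_i − v̄‖² + (ρ²η²/(1 − ρ)) Σ_{i=1}^n ‖t_i − t̄‖². -/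
/-!
Write `x = v + η t`. The mixing step contracts deviations from the mean: in the eigenbasis
`W = P diag(λ) Pᵀ`, the fixed vector `𝟏` of `W` has a single nonzero eigencoordinate (every other
eigenvalue has modulus `≤ ρ < 1`), so a vector orthogonal to `𝟏` has no component there and `W`
shrinks its squared norm by `ρ²`; applied coordinatewise in `ℝ^d`, this bounds the deviations of
`∑ⱼ wᵢⱼ xⱼ` by `ρ²` times those of `x`. The projection onto the ball is `1`-Lipschitz and the
mean minimises the sum of squared deviations, so the consensus error of `v⁺` is at most `ρ²` times
that of `x`. Young's inequality `ρ ‖a + b‖² ≤ ‖a‖² + ρ/(1-ρ) ‖b‖²` splits this into the two terms.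
-/

open Matrix

section Average

variable {ι E : Type*} [Fintype ι] [AddCommGroup E] [Module ℝ E]

noncomputable def average (v : ι → E) : E := (Fintype.card ι : ℝ)⁻¹ • ∑ i, v i

theorem average_fin {n : ℕ} (v : Fin n → E) : average v = (n : ℝ)⁻¹ • ∑ i, v i := by
  rw [average, Fintype.card_fin]

theorem average_add_smul (v w : ι → E) (c : ℝ) :
    average (fun i => v i + c • w i) = average v + c • average w := by
  simp only [average, Finset.sum_add_distrib, ← Finset.smul_sum, smul_add, smul_comm c]

theorem sum_sub_average (v : ι → E) : ∑ i, (v i - average v) = 0 := by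
  rcases isEmpty_or_nonempty ι with hι | hι
  · exact Finset.sum_of_isEmpty _
  rw [Finset.sum_sub_distrib, Finset.sum_const, Finset.card_univ, average,
    ← Nat.cast_smul_eq_nsmul ℝ, smul_smul, mul_inv_cancel₀ (by positivity), one_smul, sub_self]

end Average

noncomputable def consensusError {ι E : Type*} [Fintype ι] [SeminormedAddCommGroup E]
    [Module ℝ E] (v : ι → E) : ℝ :=
  ∑ i, ‖v i - average v‖ ^ 2

section ConsensusError

variable {ι E : Type*} [Fintype ι]

theorem sum_norm_sub_sq_eq_consensusError_add [NormedAddCommGroup E] [InnerProductSpace ℝ E]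
    (v : ι → E) (c : E) :
    ∑ i, ‖v i - c‖ ^ 2 = consensusError v + Fintype.card ι * ‖average v - c‖ ^ 2 := by
  have hsplit : ∀ i, ‖v i - c‖ ^ 2
      = ‖v i - average v‖ ^ 2 + 2 * inner ℝ (v i - average v) (average v - c)
        + ‖average v - c‖ ^ 2 := fun i => by
    rw [← norm_add_sq_real, sub_add_sub_cancel]
  simp only [consensusError, hsplit, Finset.sum_add_distrib, ← Finset.mul_sum, ← sum_inner,
    sum_sub_average, inner_zero_left, mul_zero, add_zero, Finset.sum_const, Finset.card_univ,
    nsmul_eq_mul]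

theorem consensusError_le [NormedAddCommGroup E] [InnerProductSpace ℝ E] (v : ι → E) (c : E) :
    consensusError v ≤ ∑ i, ‖v i - c‖ ^ 2 := by
  rw [sum_norm_sub_sq_eq_consensusError_add v c]
  exact le_add_of_nonneg_right (by positivity)

theorem mul_norm_add_sq_le [SeminormedAddCommGroup E] {ρ : ℝ} (hρ₀ : 0 ≤ ρ) (hρ₁ : ρ < 1)
    (a b : E) : ρ * ‖a + b‖ ^ 2 ≤ ‖a‖ ^ 2 + ρ / (1 - ρ) * ‖b‖ ^ 2 := by
  have h1ρ : 0 < 1 - ρ := by linarith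
  have htri : ρ * ‖a + b‖ ^ 2 ≤ ρ * (‖a‖ + ‖b‖) ^ 2 := by gcongr; exact norm_add_le a b
  have hsq : ρ * (‖a‖ + ‖b‖) ^ 2 ≤ ‖a‖ ^ 2 + ρ / (1 - ρ) * ‖b‖ ^ 2 := by
    rw [← sub_nonneg, ← mul_nonneg_iff_of_pos_left h1ρ]
    have hfactor : (1 - ρ) * (‖a‖ ^ 2 + ρ / (1 - ρ) * ‖b‖ ^ 2 - ρ * (‖a‖ + ‖b‖) ^ 2)
        = ((1 - ρ) * ‖a‖ - ρ * ‖b‖) ^ 2 := by field_simp; ring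
    rw [hfactor]
    positivity
  exact htri.trans hsq

theorem consensusError_add_smul_le [SeminormedAddCommGroup E] [NormedSpace ℝ E]
    {ρ : ℝ} (hρ₀ : 0 ≤ ρ) (hρ₁ : ρ < 1) (v t : ι → E) (η : ℝ) :
    ρ ^ 2 * consensusError (fun i => v i + η • t i)
      ≤ ρ * consensusError v + ρ ^ 2 * η ^ 2 / (1 - ρ) * consensusError t := by
  have hsplit : ∀ i, v i + η • t i - average (fun i => v i + η • t i)
      = (v i - average v) + η • (t i - average t) := fun i => by
    rw [average_add_smul, smul_sub]
    abel
  simp only [consensusError, hsplit, Finset.mul_sum, ← Finset.sum_add_distrib]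
  refine Finset.sum_le_sum fun i _ => ?_
  have h := mul_le_mul_of_nonneg_left
    (mul_norm_add_sq_le hρ₀ hρ₁ (v i - average v) (η • (t i - average t))) hρ₀
  rw [norm_smul, mul_pow, Real.norm_eq_abs, sq_abs] at h
  calc ρ ^ 2 * ‖v i - average v + η • (t i - average t)‖ ^ 2
      = ρ * (ρ * ‖v i - average v + η • (t i - average t)‖ ^ 2) := by ring
    _ ≤ _ := h
    _ = _ := by ring

end ConsensusError

section NearestPoint

variable {E : Type*} [NormedAddCommGroup E] [InnerProductSpace ℝ E]

theorem inner_sub_le_zero_of_forall_norm_sub_le {K : Set E} (hK : Convex ℝ K) {z p : E}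
    (hp : p ∈ K) (hmin : ∀ w ∈ K, ‖p - z‖ ≤ ‖w - z‖) :
    ∀ w ∈ K, inner ℝ (z - p) (w - p) ≤ 0 := by
  have : Nonempty K := ⟨⟨p, hp⟩⟩
  rw [← norm_eq_iInf_iff_real_inner_le_zero hK hp]
  refine le_antisymm (le_ciInf fun w => ?_) (ciInf_le ⟨0, ?_⟩ (⟨p, hp⟩ : K))
  · simpa only [norm_sub_rev z] using hmin w w.2
  · rintro _ ⟨w, rfl⟩
    exact norm_nonneg _

theorem norm_sub_le_of_inner_sub_le_zero {z z' p q : E} (hp : inner ℝ (z - p) (q - p) ≤ 0)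
    (hq : inner ℝ (z' - q) (p - q) ≤ 0) : ‖p - q‖ ≤ ‖z - z'‖ := by
  have hdecomp : z - z' = (p - q) + ((z - p) - (z' - q)) := by abel
  have hcross : 0 ≤ inner ℝ ((z - p) - (z' - q)) (p - q) := by
    have hp' : inner ℝ (z - p) (p - q) = -inner ℝ (z - p) (q - p) := by
      rw [← inner_neg_right, neg_sub]
    rw [inner_sub_left, hp']
    linarith
  have hsq : ‖p - q‖ ^ 2 ≤ inner ℝ (z - z') (p - q) := by
    rw [hdecomp, inner_add_left, real_inner_self_eq_norm_sq]
    linarith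
  by_contra! h
  nlinarith [real_inner_le_norm (z - z') (p - q), norm_nonneg (z - z')]

theorem lipschitzWith_one_of_forall_norm_sub_le {K : Set E} (hK : Convex ℝ K) {proj : E → E}
    (hmem : ∀ z, proj z ∈ K) (hmin : ∀ z, ∀ w ∈ K, ‖proj z - z‖ ≤ ‖w - z‖) :
    LipschitzWith 1 proj := by
  refine LipschitzWith.mk_one fun z z' => ?_
  rw [dist_eq_norm, dist_eq_norm]
  exact norm_sub_le_of_inner_sub_le_zero
    (inner_sub_le_zero_of_forall_norm_sub_le hK (hmem z) (hmin z) _ (hmem z'))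
    (inner_sub_le_zero_of_forall_norm_sub_le hK (hmem z') (hmin z') _ (hmem z))

end NearestPoint

section Spectral

variable {ι : Type*} [Fintype ι] [DecidableEq ι]

theorem mulVec_dotProduct_mulVec_self {P : Matrix ι ι ℝ} (hP : Pᵀ * P = 1) (a : ι → ℝ) :
    (P *ᵥ a) ⬝ᵥ (P *ᵥ a) = a ⬝ᵥ a := by
  rw [dotProduct_mulVec, ← mulVec_transpose, mulVec_mulVec, hP, one_mulVec]

theorem transpose_mulVec_apply_eq_zero_of_dotProduct_eq_zero {W P : Matrix ι ι ℝ}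
    {lam : ι → ℝ} {k₀ : ι} (hP : P * Pᵀ = 1) (hW : W = P * diagonal lam * Pᵀ)
    (hlam : ∀ k ≠ k₀, lam k ≠ 1) {u : ι → ℝ} (hu : W *ᵥ u = u) (hu₀ : u ≠ 0)
    {y : ι → ℝ} (hy : u ⬝ᵥ y = 0) :
    (Pᵀ *ᵥ y) k₀ = 0 := by
  have hPPt : ∀ a, P *ᵥ (Pᵀ *ᵥ a) = a := fun a => by rw [mulVec_mulVec, hP, one_mulVec]
  have hPtP : ∀ a, Pᵀ *ᵥ (P *ᵥ a) = a := fun a => by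
    rw [mulVec_mulVec, mul_eq_one_comm.mp hP, one_mulVec]
  set e := Pᵀ *ᵥ u
  have he_off : ∀ k ≠ k₀, e k = 0 := fun k hk => by
    have h := congrArg (fun a => (Pᵀ *ᵥ a) k) hu
    rw [hW, ← mulVec_mulVec, ← mulVec_mulVec, hPtP, mulVec_diagonal] at h
    exact (mul_eq_zero.mp (by linear_combination h : (lam k - 1) * e k = 0)).resolve_left
      (sub_ne_zero.mpr (hlam k hk))
  have he₀ : e k₀ ≠ 0 := fun h => hu₀ <| by
    have he : e = 0 := funext fun k => by
      by_cases hk : k = k₀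
      · rw [hk, h]
        rfl
      · exact he_off k hk
    calc u = P *ᵥ e := (hPPt u).symm
      _ = 0 := by rw [he, mulVec_zero]
  have h : e ⬝ᵥ (Pᵀ *ᵥ y) = u ⬝ᵥ y := by
    rw [dotProduct_mulVec, ← mulVec_transpose, transpose_transpose, hPPt]
  rw [hy, dotProduct, Finset.sum_eq_single k₀ (fun k _ hk => by rw [he_off k hk, zero_mul])
    (by simp)] at h
  exact (mul_eq_zero.mp h).resolve_left he₀

theorem mulVec_dotProduct_self_le_of_dotProduct_eq_zero {W P : Matrix ι ι ℝ} {lam : ι → ℝ}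
    {ρ : ℝ} {k₀ : ι} (hP : P * Pᵀ = 1) (hW : W = P * diagonal lam * Pᵀ)
    (hlam : ∀ k ≠ k₀, |lam k| ≤ ρ) (hρ : ρ < 1) {u : ι → ℝ} (hu : W *ᵥ u = u) (hu₀ : u ≠ 0)
    {y : ι → ℝ} (hy : u ⬝ᵥ y = 0) :
    (W *ᵥ y) ⬝ᵥ (W *ᵥ y) ≤ ρ ^ 2 * (y ⬝ᵥ y) := by
  have hP' : Pᵀ * P = 1 := mul_eq_one_comm.mp hP
  have hz₀ := transpose_mulVec_apply_eq_zero_of_dotProduct_eq_zero hP hW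
    (fun k hk h => by linarith [le_abs_self (lam k), hlam k hk]) hu hu₀ hy
  set z := Pᵀ *ᵥ y
  have hWy : W *ᵥ y = P *ᵥ (diagonal lam *ᵥ z) := by
    rw [hW, ← mulVec_mulVec, ← mulVec_mulVec]
  have hyz : y ⬝ᵥ y = z ⬝ᵥ z := by
    rw [← mulVec_dotProduct_mulVec_self hP' z, mulVec_mulVec, hP, one_mulVec]
  rw [hWy, mulVec_dotProduct_mulVec_self hP', hyz, dotProduct, dotProduct, Finset.mul_sum]
  refine Finset.sum_le_sum fun k _ => ?_
  rw [mulVec_diagonal]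
  by_cases hk : k = k₀
  · rw [hk, hz₀]
    simp
  · have : lam k ^ 2 ≤ ρ ^ 2 := sq_le_sq' (abs_le.mp (hlam k hk)).1 (abs_le.mp (hlam k hk)).2
    nlinarith [mul_self_nonneg (z k)]

end Spectral

section Mixing

variable {ι κ : Type*} [Fintype ι] [Fintype κ] {W : Matrix ι ι ℝ} {c : ℝ}

theorem sum_norm_sum_smul_sq_le
    (hW : ∀ y : ι → ℝ, ∑ i, y i = 0 → (W *ᵥ y) ⬝ᵥ (W *ᵥ y) ≤ c * (y ⬝ᵥ y))
    {g : ι → EuclideanSpace ℝ κ} (hg : ∑ j, g j = 0) :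
    ∑ i, ‖∑ j, W i j • g j‖ ^ 2 ≤ c * ∑ j, ‖g j‖ ^ 2 := by
  have hcoord : ∀ i k, (∑ j, W i j • g j) k = (W *ᵥ fun j => g j k) i := fun i k => by
    simp [mulVec, dotProduct]
  have hsum : ∀ k, ∑ j, g j k = 0 := fun k => by
    simpa using congrArg (fun x : EuclideanSpace ℝ κ => x k) hg
  simp only [EuclideanSpace.real_norm_sq_eq]
  simp only [hcoord, sq]
  rw [Finset.sum_comm, Finset.sum_comm (γ := ι), Finset.mul_sum]
  exact Finset.sum_le_sum fun k _ => hW _ (hsum k)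

theorem consensusError_map_mix_le (hW_rows : ∀ i, ∑ j, W i j = 1)
    (hW : ∀ y : ι → ℝ, ∑ i, y i = 0 → (W *ᵥ y) ⬝ᵥ (W *ᵥ y) ≤ c * (y ⬝ᵥ y))
    {f : EuclideanSpace ℝ κ → EuclideanSpace ℝ κ} (hf : LipschitzWith 1 f)
    (x : ι → EuclideanSpace ℝ κ) :
    consensusError (fun i => f (∑ j, W i j • x j)) ≤ c * consensusError x := by
  set m := average x
  have hcenter : ∀ i, ∑ j, W i j • x j - m = ∑ j, W i j • (x j - m) := fun i => by
    simp only [smul_sub, Finset.sum_sub_distrib, ← Finset.sum_smul, hW_rows i, one_smul]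
  calc consensusError (fun i => f (∑ j, W i j • x j))
      ≤ ∑ i, ‖f (∑ j, W i j • x j) - f m‖ ^ 2 := consensusError_le _ _
    _ ≤ ∑ i, ‖∑ j, W i j • (x j - m)‖ ^ 2 := by
        gcongr with i
        simpa [hcenter] using hf.norm_sub_le (∑ j, W i j • x j) m
    _ ≤ c * consensusError x := sum_norm_sum_smul_sq_le hW (sum_sub_average x)

end Mixing

/-- Consensus-error contraction for the projected `v`-update of SLDBO:
with `W` nonnegative, symmetric, doubly stochastic with spectral parameter
`ρ = max{|λ₂|, |λₙ|} < 1`, radius `r ≥ 0`, step size `η > 0`, and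
`vᵢ⁺ = 𝒫_r[∑ⱼ w_{ij}(vⱼ + η tⱼ)]`, we have
`∑ ‖vᵢ⁺ − v̄⁺‖² ≤ ρ ∑ ‖vᵢ − v̄‖² + (ρ²η²/(1−ρ)) ∑ ‖tᵢ − t̄‖²`. -/
theorem consensus_error_proj_update {n d : ℕ} (hn : 2 ≤ n)
    (W : Matrix (Fin n) (Fin n) ℝ)
    (hW_rows : ∀ i, ∑ j, W i j = 1)
    (lam : Fin n → ℝ) (P : Matrix (Fin n) (Fin n) ℝ)
    (hP : P * Pᵀ = 1)
    (hdiag : W = P * Matrix.diagonal lam * Pᵀ)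
    (hmono : Antitone lam)
    (ρ : ℝ)
    (hρdef : ρ = max |lam ⟨1, by omega⟩| |lam ⟨n - 1, by omega⟩|)
    (hρlt : ρ < 1)
    (r : ℝ) (η : ℝ)
    -- the Euclidean projection onto the closed ball of radius `r` centered at the origin
    (proj : EuclideanSpace ℝ (Fin d) → EuclideanSpace ℝ (Fin d))
    (hproj_mem : ∀ z, proj z ∈ Metric.closedBall (0 : EuclideanSpace ℝ (Fin d)) r)
    (hproj_min : ∀ z, ∀ w ∈ Metric.closedBall (0 : EuclideanSpace ℝ (Fin d)) r,
      ‖proj z - z‖ ≤ ‖w - z‖)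
    (v t : Fin n → EuclideanSpace ℝ (Fin d))
    (vplus : Fin n → EuclideanSpace ℝ (Fin d))
    (hvplus : ∀ i, vplus i = proj (∑ j, W i j • (v j + η • t j))) :
    ∑ i, ‖vplus i - (n : ℝ)⁻¹ • ∑ l, vplus l‖ ^ 2
      ≤ ρ * ∑ i, ‖v i - (n : ℝ)⁻¹ • ∑ l, v l‖ ^ 2
        + ρ ^ 2 * η ^ 2 / (1 - ρ) * ∑ i, ‖t i - (n : ℝ)⁻¹ • ∑ l, t l‖ ^ 2 := by
  obtain rfl : vplus = _ := funext hvplus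
  have hρ₀ : 0 ≤ ρ := hρdef ▸ (abs_nonneg _).trans (le_max_left _ _)
  have hlam : ∀ k ≠ (⟨0, by omega⟩ : Fin n), |lam k| ≤ ρ := fun k hk => by
    have hk₁ : (⟨1, by omega⟩ : Fin n) ≤ k :=
      Fin.le_def.mpr (Nat.one_le_iff_ne_zero.mpr fun h => hk (Fin.ext h))
    rw [hρdef, max_comm]
    exact abs_le_max_abs_abs (hmono (Fin.le_def.mpr (Nat.le_sub_one_of_lt k.isLt))) (hmono hk₁)
  have hW_one : W *ᵥ 1 = 1 := funext fun i => by simp [mulVec, dotProduct, hW_rows]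
  have hmix : ∀ y : Fin n → ℝ, ∑ i, y i = 0 → (W *ᵥ y) ⬝ᵥ (W *ᵥ y) ≤ ρ ^ 2 * (y ⬝ᵥ y) :=
    fun y hy => mulVec_dotProduct_self_le_of_dotProduct_eq_zero hP hdiag hlam hρlt hW_one
      (fun h => by simpa using congrFun h ⟨0, by omega⟩) (by rwa [one_dotProduct])
  have hproj : LipschitzWith 1 proj :=
    lipschitzWith_one_of_forall_norm_sub_le (convex_closedBall 0 r) hproj_mem hproj_min
  simpa only [consensusError, average_fin] using
    (consensusError_map_mix_le hW_rows hmix hproj _).trans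
      (consensusError_add_smul_le hρ₀ hρlt v t η)
end

section
/- For each i = 1, …, n, let F_i, f_i : ℝ^p × ℝ^q → ℝ be such that ∇F_i is L_{F,1}-Lipschitz, f_i is twice differentiable, and ∇²f_i is L_{f,2}-Lipschitz, while ∇f_i is L_{f,1}-Lipschitz. Let r_v ≥ 0 and let (x_i, y_i, v_i) and (x_i', y_i', v_i') with ‖v_i‖ ≤ r_v for all i. Define d_{x,i} := ∇₁F_i(x_i, y_i) − ∇²₁₂f_i(x_i, y_i) v_i and d_{x,i}' := ∇₁F_i(x_i', y_i') − ∇²₁₂f_i(x_i', y_i') v_i'. Then Σ_{i=1}^n ‖d_{x,i} − d_{x,i}'‖² ≤ C₁ Σ_{i=1}^n (‖x_i − x_i'‖² + ‖y_i − y_i'‖² + ‖v_i − v_i'‖²), where C₁ := 3 max{(L_{F,1} + r_v L_{f,2})², L_{f,1}²}. -/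
/-! Each difference `d_{x,i} − d_{x,i}'` splits as
`(∇₁Fᵢ − ∇₁Fᵢ') − (∇²₁₂fᵢ − ∇²₁₂fᵢ') vᵢ − ∇²₁₂fᵢ' (vᵢ − vᵢ')`. The three pieces are bounded by
the Lipschitz continuity of `∇Fᵢ`, that of `∇²fᵢ` together with `‖vᵢ‖ ≤ r_v`, and the bound
`‖∇²₁₂fᵢ‖ ≤ L_{f,1}` that the Lipschitz continuity of `∇fᵢ` forces on its derivative. Squaring
`(L_{F,1} + r_v L_{f,2}) a + L_{f,1} t` costs a factor `2 max{…}` on `a² + t²`. -/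

noncomputable section

/-- `Vec d` is the Euclidean space `ℝ^d`. -/
abbrev Vec (d : ℕ) : Type := EuclideanSpace ℝ (Fin d)

section

variable {E G : Type*} [NormedAddCommGroup E] [NormedAddCommGroup G]

lemma norm_le_mul_sqrt_of_sq_add_sq_le {u : E} {w : G} {L s : ℝ} (hL : 0 ≤ L)
    (h : ‖u‖ ^ 2 + ‖w‖ ^ 2 ≤ L ^ 2 * s) : ‖u‖ ≤ L * √s := by
  calc ‖u‖ = √(‖u‖ ^ 2) := (Real.sqrt_sq (norm_nonneg u)).symm
    _ ≤ √(L ^ 2 * s) := Real.sqrt_le_sqrt (by linarith [sq_nonneg ‖w‖])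
    _ = L * √s := by rw [Real.sqrt_mul (sq_nonneg L), Real.sqrt_sq hL]

variable [NormedSpace ℝ E] {H : Type*} [NormedAddCommGroup H] [NormedSpace ℝ H]

lemma HasFDerivAt.norm_le_of_sq_add_sq_le {g : H → E} {k : H → G} {g' : H →L[ℝ] E} {y₀ : H}
    {L : ℝ} (hg : HasFDerivAt g g' y₀) (hL : 0 ≤ L)
    (h : ∀ y, ‖g y - g y₀‖ ^ 2 + ‖k y - k y₀‖ ^ 2 ≤ L ^ 2 * ‖y - y₀‖ ^ 2) : ‖g'‖ ≤ L :=
  hg.le_of_lip' hL <| .of_forall fun y => by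
    simpa [Real.sqrt_sq (norm_nonneg _)] using norm_le_mul_sqrt_of_sq_add_sq_le hL (h y)

lemma norm_sub_apply_sub_sub_apply_le (a a' : E) (A A' : H →L[ℝ] E) (v v' : H) :
    ‖(a - A v) - (a' - A' v')‖ ≤ ‖a - a'‖ + ‖A - A'‖ * ‖v‖ + ‖A'‖ * ‖v - v'‖ := by
  have hsplit : (a - A v) - (a' - A' v') = (a - a') - (A - A') v - A' (v - v') := by
    simp only [sub_apply, map_sub]
    abel
  rw [hsplit]
  refine (norm_sub_le _ _).trans (add_le_add ((norm_sub_le _ _).trans ?_) (A'.le_opNorm _))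
  exact add_le_add_right ((A - A').le_opNorm v) _

end

lemma mul_add_mul_sq_le (M L a t : ℝ) :
    (M * a + L * t) ^ 2 ≤ 2 * max (M ^ 2) (L ^ 2) * (a ^ 2 + t ^ 2) := by
  have hM := mul_le_mul_of_nonneg_right (le_max_left (M ^ 2) (L ^ 2)) (sq_nonneg a)
  have hL := mul_le_mul_of_nonneg_right (le_max_right (M ^ 2) (L ^ 2)) (sq_nonneg t)
  nlinarith [sq_nonneg (M * a - L * t)]

theorem sum_sq_dx_diff_le_general {n p q : ℕ}
    (LF1 Lf1 Lf2 rv : ℝ)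
    (hLF1 : 0 ≤ LF1) (hLf1 : 0 ≤ Lf1)
    (gF1 : Fin n → Vec p → Vec q → Vec p) (gF2 : Fin n → Vec p → Vec q → Vec q)
    (g1 : Fin n → Vec p → Vec q → Vec p) (g2 : Fin n → Vec p → Vec q → Vec q)
    (f12 : Fin n → Vec p → Vec q → (Vec q →L[ℝ] Vec p))
    -- `f12 i x y` is the Jacobian of `∇₁fᵢ` w.r.t. `y`, and `f22 i x y` the Hessian w.r.t. `y`
    (hf12 : ∀ i x y, HasFDerivAt (fun y' => g1 i x y') (f12 i x y) y)
    -- `∇Fᵢ` is `L_{F,1}`-Lipschitz (w.r.t. the Euclidean norm on the product)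
    (hgFlip : ∀ i x y x' y',
      ‖gF1 i x y - gF1 i x' y'‖ ^ 2 + ‖gF2 i x y - gF2 i x' y'‖ ^ 2
        ≤ LF1 ^ 2 * (‖x - x'‖ ^ 2 + ‖y - y'‖ ^ 2))
    -- `∇fᵢ` is `L_{f,1}`-Lipschitz
    (hglip : ∀ i x y x' y',
      ‖g1 i x y - g1 i x' y'‖ ^ 2 + ‖g2 i x y - g2 i x' y'‖ ^ 2
        ≤ Lf1 ^ 2 * (‖x - x'‖ ^ 2 + ‖y - y'‖ ^ 2))
    -- `∇²fᵢ` is `L_{f,2}`-Lipschitz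
    (hf12lip : ∀ i x y x' y',
      ‖f12 i x y - f12 i x' y'‖ ≤ Lf2 * Real.sqrt (‖x - x'‖ ^ 2 + ‖y - y'‖ ^ 2))
    (X X' : Fin n → Vec p) (Y Y' V V' : Fin n → Vec q)
    (hV : ∀ i, ‖V i‖ ≤ rv) :
    ∑ i, ‖(gF1 i (X i) (Y i) - (f12 i (X i) (Y i)) (V i))
          - (gF1 i (X' i) (Y' i) - (f12 i (X' i) (Y' i)) (V' i))‖ ^ 2
      ≤ 3 * max ((LF1 + rv * Lf2) ^ 2) (Lf1 ^ 2)
          * ∑ i, (‖X i - X' i‖ ^ 2 + ‖Y i - Y' i‖ ^ 2 + ‖V i - V' i‖ ^ 2) := by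
  rw [Finset.mul_sum]
  refine Finset.sum_le_sum fun i _ => ?_
  set s := ‖X i - X' i‖ ^ 2 + ‖Y i - Y' i‖ ^ 2
  have hF := norm_le_mul_sqrt_of_sq_add_sq_le hLF1 (hgFlip i (X i) (Y i) (X' i) (Y' i))
  have hf12' : ‖f12 i (X' i) (Y' i)‖ ≤ Lf1 :=
    (hf12 i (X' i) (Y' i)).norm_le_of_sq_add_sq_le hLf1 fun y => by
      simpa using hglip i (X' i) y (X' i) (Y' i)
  have hf12V := mul_le_mul_of_nonneg (hf12lip i (X i) (Y i) (X' i) (Y' i)) (hV i)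
    (norm_nonneg _) ((norm_nonneg _).trans (hV i))
  have hdiff := (norm_sub_apply_sub_sub_apply_le _ _ _ _ (V i) (V' i)).trans
    (add_le_add (add_le_add hF hf12V) (mul_le_mul_of_nonneg_right hf12' (norm_nonneg _)))
  calc _ ≤ ((LF1 + rv * Lf2) * √s + Lf1 * ‖V i - V' i‖) ^ 2 :=
        pow_le_pow_left₀ (norm_nonneg _) (by linarith) 2
    _ ≤ 2 * max ((LF1 + rv * Lf2) ^ 2) (Lf1 ^ 2) * (√s ^ 2 + ‖V i - V' i‖ ^ 2) :=
        mul_add_mul_sq_le _ _ _ _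
    _ ≤ 3 * max ((LF1 + rv * Lf2) ^ 2) (Lf1 ^ 2) * (s + ‖V i - V' i‖ ^ 2) := by
        rw [Real.sq_sqrt (by positivity)]
        gcongr
        norm_num

/-- Lipschitz-type bound for the differences of the directions
`d_{x,i} = ∇₁Fᵢ(xᵢ, yᵢ) − ∇²₁₂fᵢ(xᵢ, yᵢ) vᵢ`: if each `∇Fᵢ` is `L_{F,1}`-Lipschitz, each
`fᵢ` is twice differentiable with `L_{f,1}`-Lipschitz gradient and `L_{f,2}`-Lipschitz
second derivative, and `‖vᵢ‖ ≤ r_v`, then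
`∑ ‖d_{x,i} − d_{x,i}'‖² ≤ C₁ ∑ (‖xᵢ−xᵢ'‖² + ‖yᵢ−yᵢ'‖² + ‖vᵢ−vᵢ'‖²)` with
`C₁ = 3 max{(L_{F,1} + r_v L_{f,2})², L_{f,1}²}`.
Here `gF1 i, gF2 i` (resp. `g1 i, g2 i`) are the partial gradients of `F i` (resp. `f i`),
and `f12 i x y : H →L[ℝ] E` is the Jacobian of `∇₁fᵢ` with respect to `y`. -/
theorem sum_sq_dx_diff_le {n p q : ℕ}
    (LF1 Lf1 Lf2 rv : ℝ)
    (hLF1 : 0 ≤ LF1) (hLf1 : 0 ≤ Lf1) (hLf2 : 0 ≤ Lf2) (hrv : 0 ≤ rv)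
    (F f : Fin n → Vec p → Vec q → ℝ)
    (gF1 : Fin n → Vec p → Vec q → Vec p) (gF2 : Fin n → Vec p → Vec q → Vec q)
    (g1 : Fin n → Vec p → Vec q → Vec p) (g2 : Fin n → Vec p → Vec q → Vec q)
    (f12 : Fin n → Vec p → Vec q → (Vec q →L[ℝ] Vec p))
    (f22 : Fin n → Vec p → Vec q → (Vec q →L[ℝ] Vec q))
    -- `gF1, gF2` are the partial gradients of `F`
    (hgF1 : ∀ i x y, HasGradientAt (fun x' => F i x' y) (gF1 i x y) x)
    (hgF2 : ∀ i x y, HasGradientAt (fun y' => F i x y') (gF2 i x y) y)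
    -- `g1, g2` are the partial gradients of `f`
    (hg1 : ∀ i x y, HasGradientAt (fun x' => f i x' y) (g1 i x y) x)
    (hg2 : ∀ i x y, HasGradientAt (fun y' => f i x y') (g2 i x y) y)
    -- `f12 i x y` is the Jacobian of `∇₁fᵢ` w.r.t. `y`, and `f22 i x y` the Hessian w.r.t. `y`
    (hf12 : ∀ i x y, HasFDerivAt (fun y' => g1 i x y') (f12 i x y) y)
    (hf22 : ∀ i x y, HasFDerivAt (fun y' => g2 i x y') (f22 i x y) y)
    -- `∇Fᵢ` is `L_{F,1}`-Lipschitz (w.r.t. the Euclidean norm on the product)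
    (hgFlip : ∀ i x y x' y',
      ‖gF1 i x y - gF1 i x' y'‖ ^ 2 + ‖gF2 i x y - gF2 i x' y'‖ ^ 2
        ≤ LF1 ^ 2 * (‖x - x'‖ ^ 2 + ‖y - y'‖ ^ 2))
    -- `∇fᵢ` is `L_{f,1}`-Lipschitz
    (hglip : ∀ i x y x' y',
      ‖g1 i x y - g1 i x' y'‖ ^ 2 + ‖g2 i x y - g2 i x' y'‖ ^ 2
        ≤ Lf1 ^ 2 * (‖x - x'‖ ^ 2 + ‖y - y'‖ ^ 2))
    -- `∇²fᵢ` is `L_{f,2}`-Lipschitz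
    (hf12lip : ∀ i x y x' y',
      ‖f12 i x y - f12 i x' y'‖ ≤ Lf2 * Real.sqrt (‖x - x'‖ ^ 2 + ‖y - y'‖ ^ 2))
    (hf22lip : ∀ i x y x' y',
      ‖f22 i x y - f22 i x' y'‖ ≤ Lf2 * Real.sqrt (‖x - x'‖ ^ 2 + ‖y - y'‖ ^ 2))
    (X X' : Fin n → Vec p) (Y Y' V V' : Fin n → Vec q)
    (hV : ∀ i, ‖V i‖ ≤ rv) :
    ∑ i, ‖(gF1 i (X i) (Y i) - (f12 i (X i) (Y i)) (V i))
          - (gF1 i (X' i) (Y' i) - (f12 i (X' i) (Y' i)) (V' i))‖ ^ 2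
      ≤ 3 * max ((LF1 + rv * Lf2) ^ 2) (Lf1 ^ 2)
          * ∑ i, (‖X i - X' i‖ ^ 2 + ‖Y i - Y' i‖ ^ 2 + ‖V i - V' i‖ ^ 2) :=
  sum_sq_dx_diff_le_general LF1 Lf1 Lf2 rv hLF1 hLf1 gF1 gF2 g1 g2 f12 hf12 hgFlip hglip hf12lip X
    X' Y Y' V V' hV
end
end

section
/- For each i = 1, …, n, let f_i : ℝ^p × ℝ^q → ℝ have L_{f,1}-Lipschitz gradient, set f := (1/n)Σ_{i=1}^n f_i, and let y* ∈ ℝ^q and x̄ ∈ ℝ^p satisfy ∇₂f(x̄, y*) = 0. Let (x_1, y_1), …, (x_n, y_n) be points with averages x̄ = (1/n)Σ_i x_i and ȳ := (1/n)Σ_i y_i, and set d̄_y := (1/n)Σ_{i=1}^n ∇₂f_i(x_i, y_i). Then ‖d̄_y‖² ≤ (2L_{f,1}²/n) Σ_{i=1}^n (‖x_i − x̄‖² + ‖y_i − ȳ‖²) + 2L_{f,1}² ‖ȳ − y*‖². -/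
noncomputable section

/-!
Because `∇₂f(x̄, y*) = 0`, `d̄_y` is the average of the differences `∇₂fᵢ(xᵢ, yᵢ) − ∇₂fᵢ(x̄, y*)`.
The squared norm of an average is at most the average of the squared norms, each difference is
controlled by the Lipschitz bound, and `‖yᵢ − y*‖² ≤ 2‖yᵢ − ȳ‖² + 2‖ȳ − y*‖²` recenters it at `ȳ`.
-/

open Finset

section SquaredNorms

variable {ι E : Type*} [SeminormedAddCommGroup E]

theorem norm_sum_sq_le_card_mul_sum_sq (s : Finset ι) (v : ι → E) :
    ‖∑ i ∈ s, v i‖ ^ 2 ≤ #s * ∑ i ∈ s, ‖v i‖ ^ 2 :=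
  (pow_le_pow_left₀ (norm_nonneg _) (norm_sum_le s v) 2).trans (sq_sum_le_card_mul_sum_sq ..)

theorem norm_inv_card_smul_sum_sq_le [NormedSpace ℝ E] (s : Finset ι) (v : ι → E) :
    ‖(#s : ℝ)⁻¹ • ∑ i ∈ s, v i‖ ^ 2 ≤ (#s : ℝ)⁻¹ * ∑ i ∈ s, ‖v i‖ ^ 2 := by
  rcases (Nat.cast_nonneg (α := ℝ) #s).eq_or_lt with hs | hs
  · simp [← hs]
  calc ‖(#s : ℝ)⁻¹ • ∑ i ∈ s, v i‖ ^ 2 = (#s : ℝ)⁻¹ ^ 2 * ‖∑ i ∈ s, v i‖ ^ 2 := by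
        rw [norm_smul, mul_pow, Real.norm_of_nonneg (by positivity)]
    _ ≤ (#s : ℝ)⁻¹ ^ 2 * (#s * ∑ i ∈ s, ‖v i‖ ^ 2) := by
        gcongr; exact norm_sum_sq_le_card_mul_sum_sq s v
    _ = (#s : ℝ)⁻¹ * ∑ i ∈ s, ‖v i‖ ^ 2 := by field_simp

theorem norm_sub_sq_le_two_mul (a b c : E) :
    ‖a - c‖ ^ 2 ≤ 2 * ‖a - b‖ ^ 2 + 2 * ‖b - c‖ ^ 2 := by
  calc ‖a - c‖ ^ 2 ≤ (‖a - b‖ + ‖b - c‖) ^ 2 := by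
        gcongr; exact norm_sub_le_norm_sub_add_norm_sub a b c
    _ ≤ 2 * ‖a - b‖ ^ 2 + 2 * ‖b - c‖ ^ 2 := by
        linarith [add_sq_le (a := ‖a - b‖) (b := ‖b - c‖)]

end SquaredNorms

theorem le_sq_lipschitz_bound_recenter {E F : Type*} [SeminormedAddCommGroup E]
    [SeminormedAddCommGroup F] {L u : ℝ} {x x' : E} {y y' : F} (b : F)
    (h : u ≤ L ^ 2 * (‖x - x'‖ ^ 2 + ‖y - y'‖ ^ 2)) :
    u ≤ 2 * L ^ 2 * (‖x - x'‖ ^ 2 + ‖y - b‖ ^ 2) + 2 * L ^ 2 * ‖b - y'‖ ^ 2 := by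
  have := norm_sub_sq_le_two_mul y b y'
  nlinarith [sq_nonneg L, sq_nonneg ‖x - x'‖]

theorem sq_norm_dybar_le_general {n p q : ℕ} (hn : 0 < n)
    (Lf1 : ℝ)
    (g1 : Fin n → Vec p → Vec q → Vec p) (g2 : Fin n → Vec p → Vec q → Vec q)
    -- `∇fᵢ` is `L_{f,1}`-Lipschitz (w.r.t. the Euclidean norm on the product)
    (hglip : ∀ i x y x' y',
      ‖g1 i x y - g1 i x' y'‖ ^ 2 + ‖g2 i x y - g2 i x' y'‖ ^ 2
        ≤ Lf1 ^ 2 * (‖x - x'‖ ^ 2 + ‖y - y'‖ ^ 2))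
    (X : Fin n → Vec p) (Y : Fin n → Vec q)
    (xbar : Vec p)
    (ybar : Vec q)
    -- `y*` satisfies `∇₂f(x̄, y*) = 0`, where `f = (1/n) ∑ᵢ fᵢ`
    (ystar : Vec q) (hystar : (n : ℝ)⁻¹ • ∑ i, g2 i xbar ystar = 0) :
    ‖(n : ℝ)⁻¹ • ∑ i, g2 i (X i) (Y i)‖ ^ 2
      ≤ 2 * Lf1 ^ 2 / n * ∑ i, (‖X i - xbar‖ ^ 2 + ‖Y i - ybar‖ ^ 2)
        + 2 * Lf1 ^ 2 * ‖ybar - ystar‖ ^ 2 := by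
  have hdiff : (n : ℝ)⁻¹ • ∑ i, g2 i (X i) (Y i)
      = (n : ℝ)⁻¹ • ∑ i, (g2 i (X i) (Y i) - g2 i xbar ystar) := by
    rw [sum_sub_distrib, smul_sub, hystar, sub_zero]
  have hterm (i : Fin n) : ‖g2 i (X i) (Y i) - g2 i xbar ystar‖ ^ 2
      ≤ 2 * Lf1 ^ 2 * (‖X i - xbar‖ ^ 2 + ‖Y i - ybar‖ ^ 2) + 2 * Lf1 ^ 2 * ‖ybar - ystar‖ ^ 2 :=
    le_sq_lipschitz_bound_recenter ybar <|
      le_of_add_le_of_nonneg_right (hglip i (X i) (Y i) xbar ystar) (sq_nonneg _)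
  have hav := norm_inv_card_smul_sum_sq_le univ fun i => g2 i (X i) (Y i) - g2 i xbar ystar
  rw [card_univ, Fintype.card_fin] at hav
  rw [hdiff]
  calc _ ≤ _ := hav
    _ ≤ (n : ℝ)⁻¹ * ∑ i : Fin n, (2 * Lf1 ^ 2 * (‖X i - xbar‖ ^ 2 + ‖Y i - ybar‖ ^ 2)
          + 2 * Lf1 ^ 2 * ‖ybar - ystar‖ ^ 2) := by gcongr with i; exact hterm i
    _ = _ := by
      rw [sum_add_distrib, ← mul_sum, sum_const, card_univ, Fintype.card_fin, nsmul_eq_mul]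
      field_simp

/-- Bound on the average lower-level direction
`d̄_y = (1/n) ∑ᵢ ∇₂fᵢ(xᵢ, yᵢ)`: if each `fᵢ` has `L_{f,1}`-Lipschitz gradient,
`f = (1/n) ∑ fᵢ` and `∇₂f(x̄, y*) = 0`, then
`‖d̄_y‖² ≤ (2L_{f,1}²/n) ∑ᵢ (‖xᵢ − x̄‖² + ‖yᵢ − ȳ‖²) + 2L_{f,1}² ‖ȳ − y*‖²`.
Here `g1 i, g2 i` are the partial gradients of `f i`. -/
theorem sq_norm_dybar_le {n p q : ℕ} (hn : 0 < n)
    (Lf1 : ℝ) (hLf1 : 0 ≤ Lf1)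
    (f : Fin n → Vec p → Vec q → ℝ)
    (g1 : Fin n → Vec p → Vec q → Vec p) (g2 : Fin n → Vec p → Vec q → Vec q)
    -- `g1, g2` are the partial gradients of `f i`
    (hg1 : ∀ i x y, HasGradientAt (fun x' => f i x' y) (g1 i x y) x)
    (hg2 : ∀ i x y, HasGradientAt (fun y' => f i x y') (g2 i x y) y)
    -- `∇fᵢ` is `L_{f,1}`-Lipschitz (w.r.t. the Euclidean norm on the product)
    (hglip : ∀ i x y x' y',
      ‖g1 i x y - g1 i x' y'‖ ^ 2 + ‖g2 i x y - g2 i x' y'‖ ^ 2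
        ≤ Lf1 ^ 2 * (‖x - x'‖ ^ 2 + ‖y - y'‖ ^ 2))
    (X : Fin n → Vec p) (Y : Fin n → Vec q)
    (xbar : Vec p) (hxbar : xbar = (n : ℝ)⁻¹ • ∑ i, X i)
    (ybar : Vec q) (hybar : ybar = (n : ℝ)⁻¹ • ∑ i, Y i)
    -- `y*` satisfies `∇₂f(x̄, y*) = 0`, where `f = (1/n) ∑ᵢ fᵢ`
    (ystar : Vec q) (hystar : (n : ℝ)⁻¹ • ∑ i, g2 i xbar ystar = 0) :
    ‖(n : ℝ)⁻¹ • ∑ i, g2 i (X i) (Y i)‖ ^ 2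
      ≤ 2 * Lf1 ^ 2 / n * ∑ i, (‖X i - xbar‖ ^ 2 + ‖Y i - ybar‖ ^ 2)
        + 2 * Lf1 ^ 2 * ‖ybar - ystar‖ ^ 2 :=
  sq_norm_dybar_le_general hn Lf1 g1 g2 hglip X Y xbar ybar ystar hystar
end
end

section
/- For each i = 1, …, n, let F_i, f_i : ℝ^p × ℝ^q → ℝ be such that ∇F_i is L_{F,1}-Lipschitz, f_i is twice differentiable, ∇f_i is L_{f,1}-Lipschitz, and ∇²f_i is L_{f,2}-Lipschitz; set F := (1/n)Σ F_i and f := (1/n)Σ f_i. Let r_v ≥ 0 and let x̄ ∈ ℝ^p, y*, ȳ ∈ ℝ^q, v*, v̄ ∈ ℝ^q with ‖v*‖ ≤ r_v, ∇₂F(x̄, y*) = ∇²₂₂f(x̄, y*) v*, and points (x_i, y_i, v_i) with ‖v_i‖ ≤ r_v, x̄ = (1/n)Σ x_i, ȳ = (1/n)Σ y_i, v̄ = (1/n)Σ v_i. Set d̄_v := (1/n)Σ_{i=1}^n [∇₂F_i(x_i, y_i) − ∇²₂₂f_i(x_i, y_i) v_i]. Then ‖d̄_v‖² ≤ (5(L_{F,1}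 + r_v L_{f,2})²/n) Σ_i (‖x_i − x̄‖² + ‖y_i − ȳ‖²) + (5L_{f,1}²/n) Σ_i ‖v_i − v̄‖² + 5(L_{F,1} + r_v L_{f,2})² ‖ȳ − y*‖² + 5L_{f,1}² ‖v̄ − v*‖². -/
/-!
Write `dᵢ(x, y, v) = ∇₂Fᵢ(x, y) − ∇²₂₂fᵢ(x, y) v`. The average of `dᵢ(x̄, y*, v*)` vanishes by the
optimality system, so `d̄_v` is the average of `dᵢ(xᵢ, yᵢ, vᵢ) − dᵢ(x̄, y*, v*)`. Telescope this
through `(x̄, ȳ, vᵢ)`, `(x̄, ȳ, v̄)` and `(x̄, y*, v̄)`: moving the point costs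
`(L_{F,1} + r_v L_{f,2})` times its displacement (all vectors involved have norm at most `r_v`),
moving the vector costs `L_{f,1}` times its displacement, since the Lipschitz constant of `∇f_i`
bounds the Hessian. Then `(a + b + c + d)² ≤ 4(a² + b² + c² + d²)` and Jensen's inequality for the
average give the bound.
-/

noncomputable section

open Finset

theorem le_mul_sqrt_of_sq_add_sq_le {a b L s : ℝ} (hb : 0 ≤ b) (hL : 0 ≤ L)
    (h : a ^ 2 + b ^ 2 ≤ L ^ 2 * s) : b ≤ L * √s :=
  calc b = √(b ^ 2) := (Real.sqrt_sq hb).symm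
    _ ≤ √(L ^ 2 * s) := Real.sqrt_le_sqrt (by linarith [sq_nonneg a])
    _ = L * √s := by rw [Real.sqrt_mul (sq_nonneg L), Real.sqrt_sq hL]

theorem sq_le_four_mul_sum_sq_of_le_add {u a b c d : ℝ} (hu : 0 ≤ u) (h : u ≤ a + b + c + d) :
    u ^ 2 ≤ 4 * (a ^ 2 + b ^ 2 + c ^ 2 + d ^ 2) := by
  nlinarith [sq_nonneg (a - b), sq_nonneg (a - c), sq_nonneg (a - d), sq_nonneg (b - c),
    sq_nonneg (b - d), sq_nonneg (c - d)]

theorem inv_card_mul_sum_const_le {ι : Type*} (s : Finset ι) {c : ℝ} (hc : 0 ≤ c) :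
    (#s : ℝ)⁻¹ * ∑ _i ∈ s, c ≤ c := by
  rw [sum_const, nsmul_eq_mul, ← mul_assoc]
  exact mul_le_of_le_one_left hc (inv_mul_le_one_of_le₀ le_rfl (Nat.cast_nonneg _))

section Averages

variable {ι E : Type*} [SeminormedAddCommGroup E] [NormedSpace ℝ E]

theorem norm_inv_card_smul_sum_le (s : Finset ι) {a : ι → E} {r : ℝ} (hr : 0 ≤ r)
    (ha : ∀ i ∈ s, ‖a i‖ ≤ r) : ‖(#s : ℝ)⁻¹ • ∑ i ∈ s, a i‖ ≤ r :=
  calc ‖(#s : ℝ)⁻¹ • ∑ i ∈ s, a i‖ = (#s : ℝ)⁻¹ * ‖∑ i ∈ s, a i‖ := by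
        rw [norm_smul, norm_inv, Real.norm_natCast]
    _ ≤ (#s : ℝ)⁻¹ * ∑ _i ∈ s, r := by gcongr; exact norm_sum_le_of_le s ha
    _ ≤ r := inv_card_mul_sum_const_le s hr

theorem sq_norm_inv_card_smul_sum_le (s : Finset ι) (a : ι → E) :
    ‖(#s : ℝ)⁻¹ • ∑ i ∈ s, a i‖ ^ 2 ≤ (#s : ℝ)⁻¹ * ∑ i ∈ s, ‖a i‖ ^ 2 :=
  calc ‖(#s : ℝ)⁻¹ • ∑ i ∈ s, a i‖ ^ 2 = (#s : ℝ)⁻¹ ^ 2 * ‖∑ i ∈ s, a i‖ ^ 2 := by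
        rw [norm_smul, norm_inv, Real.norm_natCast, mul_pow]
    _ ≤ (#s : ℝ)⁻¹ ^ 2 * (#s * ∑ i ∈ s, ‖a i‖ ^ 2) := by
        gcongr
        exact (pow_le_pow_left₀ (norm_nonneg _) (norm_sum_le s a) 2).trans
          (sq_sum_le_card_mul_sum_sq ..)
    _ = (#s : ℝ)⁻¹ * ((#s : ℝ)⁻¹ * #s) * ∑ i ∈ s, ‖a i‖ ^ 2 := by ring
    _ ≤ (#s : ℝ)⁻¹ * ∑ i ∈ s, ‖a i‖ ^ 2 := by
        gcongr ?_ * _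
        exact mul_le_of_le_one_right (by positivity) (inv_mul_le_one_of_le₀ le_rfl (by positivity))

end Averages

section Residual

variable {P Q E F : Type*} [SeminormedAddCommGroup P] [SeminormedAddCommGroup Q]
  [SeminormedAddCommGroup E] [NormedSpace ℝ E] [SeminormedAddCommGroup F] [NormedSpace ℝ F]

theorem norm_sub_apply_sub_sub_apply_le_s11 {a a' : F} {T T' : E →L[ℝ] F} {v : E} {α β r : ℝ}
    (ha : ‖a - a'‖ ≤ α) (hT : ‖T - T'‖ ≤ β) (hv : ‖v‖ ≤ r) :
    ‖(a - T v) - (a' - T' v)‖ ≤ α + r * β :=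
  calc ‖(a - T v) - (a' - T' v)‖ = ‖(a - a') - (T - T') v‖ := by
        rw [sub_apply]; abel_nf
    _ ≤ ‖a - a'‖ + ‖T - T'‖ * ‖v‖ := (norm_sub_le _ _).trans (by gcongr; exact (T - T').le_opNorm v)
    _ ≤ α + β * r := by gcongr; exact (norm_nonneg _).trans hT
    _ = α + r * β := by ring

theorem sq_norm_residual_sub_le {G : P → Q → F} {H : P → Q → E →L[ℝ] F} {LG LH L r : ℝ}
    (hG : ∀ x y x' y', ‖G x y - G x' y'‖ ≤ LG * √(‖x - x'‖ ^ 2 + ‖y - y'‖ ^ 2))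
    (hH : ∀ x y x' y', ‖H x y - H x' y'‖ ≤ LH * √(‖x - x'‖ ^ 2 + ‖y - y'‖ ^ 2))
    (hHL : ∀ x y, ‖H x y‖ ≤ L) {x x₀ : P} {y y₀ y₁ : Q} {v v₀ v₁ : E}
    (hv : ‖v‖ ≤ r) (hv₀ : ‖v₀‖ ≤ r) :
    ‖(G x y - H x y v) - (G x₀ y₁ - H x₀ y₁ v₁)‖ ^ 2
      ≤ 4 * ((LG + r * LH) ^ 2 * (‖x - x₀‖ ^ 2 + ‖y - y₀‖ ^ 2) + L ^ 2 * ‖v - v₀‖ ^ 2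
        + (LG + r * LH) ^ 2 * ‖y₀ - y₁‖ ^ 2 + L ^ 2 * ‖v₀ - v₁‖ ^ 2) := by
  have hmove : ∀ {x y x' y'} {w : E}, ‖w‖ ≤ r →
      ‖(G x y - H x y w) - (G x' y' - H x' y' w)‖
        ≤ (LG + r * LH) * √(‖x - x'‖ ^ 2 + ‖y - y'‖ ^ 2) := fun hw ↦
    (norm_sub_apply_sub_sub_apply_le_s11 (hG ..) (hH ..) hw).trans_eq (by ring)
  have hvary : ∀ x y (w w' : E), ‖(G x y - H x y w) - (G x y - H x y w')‖ ≤ L * ‖w - w'‖ := by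
    intro x y w w'
    rw [sub_sub_sub_cancel_left, ← map_sub, norm_sub_rev]
    exact ((H x y).le_opNorm _).trans (by gcongr; exact hHL x y)
  have h₁ := hmove (x := x) (y := y) (x' := x₀) (y' := y₀) hv
  have h₂ := hvary x₀ y₀ v v₀
  have h₃ : ‖(G x₀ y₀ - H x₀ y₀ v₀) - (G x₀ y₁ - H x₀ y₁ v₀)‖ ≤ (LG + r * LH) * ‖y₀ - y₁‖ := by
    simpa using hmove (x := x₀) (y := y₀) (x' := x₀) (y' := y₁) hv₀
  have h₄ := hvary x₀ y₁ v₀ v₁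
  have key := sq_le_four_mul_sum_sq_of_le_add (norm_nonneg _) <|
    calc ‖(G x y - H x y v) - (G x₀ y₁ - H x₀ y₁ v₁)‖
        ≤ ‖(G x y - H x y v) - (G x₀ y₀ - H x₀ y₀ v)‖
          + ‖(G x₀ y₀ - H x₀ y₀ v) - (G x₀ y₀ - H x₀ y₀ v₀)‖
          + ‖(G x₀ y₀ - H x₀ y₀ v₀) - (G x₀ y₁ - H x₀ y₁ v₀)‖
          + ‖(G x₀ y₁ - H x₀ y₁ v₀) - (G x₀ y₁ - H x₀ y₁ v₁)‖ := by
          refine le_trans (le_of_eq ?_) norm_add₄_le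
          congr 1; abel
      _ ≤ _ := add_le_add (add_le_add (add_le_add h₁ h₂) h₃) h₄
  rwa [mul_pow, mul_pow, mul_pow, mul_pow, Real.sq_sqrt (by positivity)] at key


theorem sq_norm_avg_residual_sub_le {ι : Type*} (s : Finset ι) {G : ι → P → Q → F}
    {H : ι → P → Q → E →L[ℝ] F} {LG LH L r : ℝ}
    (hG : ∀ i x y x' y', ‖G i x y - G i x' y'‖ ≤ LG * √(‖x - x'‖ ^ 2 + ‖y - y'‖ ^ 2))
    (hH : ∀ i x y x' y', ‖H i x y - H i x' y'‖ ≤ LH * √(‖x - x'‖ ^ 2 + ‖y - y'‖ ^ 2))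
    (hHL : ∀ i x y, ‖H i x y‖ ≤ L) {x : ι → P} {y : ι → Q} {v : ι → E} {x₀ : P} {y₀ y₁ : Q}
    {v₀ v₁ : E} (hv : ∀ i ∈ s, ‖v i‖ ≤ r) (hv₀ : ‖v₀‖ ≤ r) :
    ‖(#s : ℝ)⁻¹ • ∑ i ∈ s, ((G i (x i) (y i) - H i (x i) (y i) (v i))
        - (G i x₀ y₁ - H i x₀ y₁ v₁))‖ ^ 2
      ≤ 4 * ((LG + r * LH) ^ 2 * ((#s : ℝ)⁻¹ * ∑ i ∈ s, (‖x i - x₀‖ ^ 2 + ‖y i - y₀‖ ^ 2))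
        + L ^ 2 * ((#s : ℝ)⁻¹ * ∑ i ∈ s, ‖v i - v₀‖ ^ 2)
        + (LG + r * LH) ^ 2 * ‖y₀ - y₁‖ ^ 2 + L ^ 2 * ‖v₀ - v₁‖ ^ 2) := by
  set c := LG + r * LH
  have hC := inv_card_mul_sum_const_le s (c := c ^ 2 * ‖y₀ - y₁‖ ^ 2) (by positivity)
  have hD := inv_card_mul_sum_const_le s (c := L ^ 2 * ‖v₀ - v₁‖ ^ 2) (by positivity)
  calc _ ≤ (#s : ℝ)⁻¹ * ∑ i ∈ s, ‖(G i (x i) (y i) - H i (x i) (y i) (v i))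
        - (G i x₀ y₁ - H i x₀ y₁ v₁)‖ ^ 2 := sq_norm_inv_card_smul_sum_le s _
    _ ≤ (#s : ℝ)⁻¹ * ∑ i ∈ s, 4 * (c ^ 2 * (‖x i - x₀‖ ^ 2 + ‖y i - y₀‖ ^ 2)
        + L ^ 2 * ‖v i - v₀‖ ^ 2 + c ^ 2 * ‖y₀ - y₁‖ ^ 2 + L ^ 2 * ‖v₀ - v₁‖ ^ 2) := by
        gcongr with i hi
        exact sq_norm_residual_sub_le (hG i) (hH i) (hHL i) (hv i hi) hv₀
    _ ≤ _ := by
        rw [← mul_sum, sum_add_distrib, sum_add_distrib, sum_add_distrib, ← mul_sum, ← mul_sum]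
        linarith

end Residual

theorem sq_norm_dvbar_le_general {n p q : ℕ}
    (LF1 Lf1 Lf2 rv : ℝ)
    (hLF1 : 0 ≤ LF1) (hLf1 : 0 ≤ Lf1) (hrv : 0 ≤ rv)
    (gF1 : Fin n → Vec p → Vec q → Vec p) (gF2 : Fin n → Vec p → Vec q → Vec q)
    (g1 : Fin n → Vec p → Vec q → Vec p) (g2 : Fin n → Vec p → Vec q → Vec q)
    (f22 : Fin n → Vec p → Vec q → (Vec q →L[ℝ] Vec q))
    -- `f22 i x y` is the Hessian of `f i` w.r.t. the second block
    (hf22 : ∀ i x y, HasFDerivAt (fun y' => g2 i x y') (f22 i x y) y)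
    -- `∇Fᵢ` is `L_{F,1}`-Lipschitz
    (hgFlip : ∀ i x y x' y',
      ‖gF1 i x y - gF1 i x' y'‖ ^ 2 + ‖gF2 i x y - gF2 i x' y'‖ ^ 2
        ≤ LF1 ^ 2 * (‖x - x'‖ ^ 2 + ‖y - y'‖ ^ 2))
    -- `∇fᵢ` is `L_{f,1}`-Lipschitz
    (hglip : ∀ i x y x' y',
      ‖g1 i x y - g1 i x' y'‖ ^ 2 + ‖g2 i x y - g2 i x' y'‖ ^ 2
        ≤ Lf1 ^ 2 * (‖x - x'‖ ^ 2 + ‖y - y'‖ ^ 2))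
    -- `∇²fᵢ` is `L_{f,2}`-Lipschitz
    (hf22lip : ∀ i x y x' y',
      ‖f22 i x y - f22 i x' y'‖ ≤ Lf2 * Real.sqrt (‖x - x'‖ ^ 2 + ‖y - y'‖ ^ 2))
    (X : Fin n → Vec p) (Y V : Fin n → Vec q)
    (xbar : Vec p)
    (ybar : Vec q)
    (vbar : Vec q) (hvbar : vbar = (n : ℝ)⁻¹ • ∑ i, V i)
    (hV : ∀ i, ‖V i‖ ≤ rv)
    (ystar vstar : Vec q)
    -- `∇₂F(x̄, y*) = ∇²₂₂f(x̄, y*) v*`, where `F = (1/n) ∑ Fᵢ`, `f = (1/n) ∑ fᵢ`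
    (hsystem : (n : ℝ)⁻¹ • ∑ i, gF2 i xbar ystar
      = (n : ℝ)⁻¹ • ∑ i, (f22 i xbar ystar) vstar) :
    ‖(n : ℝ)⁻¹ • ∑ i, (gF2 i (X i) (Y i) - (f22 i (X i) (Y i)) (V i))‖ ^ 2
      ≤ 5 * (LF1 + rv * Lf2) ^ 2 / n * ∑ i, (‖X i - xbar‖ ^ 2 + ‖Y i - ybar‖ ^ 2)
        + 5 * Lf1 ^ 2 / n * ∑ i, ‖V i - vbar‖ ^ 2
        + 5 * (LF1 + rv * Lf2) ^ 2 * ‖ybar - ystar‖ ^ 2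
        + 5 * Lf1 ^ 2 * ‖vbar - vstar‖ ^ 2 := by
  have hgF2 : ∀ i x y x' y', ‖gF2 i x y - gF2 i x' y'‖ ≤ LF1 * √(‖x - x'‖ ^ 2 + ‖y - y'‖ ^ 2) :=
    fun i x y x' y' ↦ le_mul_sqrt_of_sq_add_sq_le (norm_nonneg _) hLF1 (hgFlip i x y x' y')
  have hf22_le : ∀ i x y, ‖f22 i x y‖ ≤ Lf1 := fun i x y ↦
    (hf22 i x y).le_of_lip' hLf1 <| .of_forall fun y' ↦ by
      simpa using le_mul_sqrt_of_sq_add_sq_le (norm_nonneg _) hLf1 (hglip i x y' x y)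
  have hvbar_le : ‖vbar‖ ≤ rv := by
    simpa [hvbar] using norm_inv_card_smul_sum_le univ hrv fun i _ ↦ hV i
  have havg := sq_norm_avg_residual_sub_le univ hgF2 hf22lip hf22_le (fun i _ ↦ hV i) hvbar_le
    (x := X) (y := Y) (x₀ := xbar) (y₀ := ybar) (y₁ := ystar) (v₁ := vstar)
  -- the averaged terms at `(x̄, y*, v*)` cancel by `hsystem`
  simp only [card_univ, Fintype.card_fin, sum_sub_distrib, smul_sub, hsystem, sub_self,
    sub_zero] at havg ⊢
  refine havg.trans (le_of_le_of_eq (mul_le_mul_of_nonneg_right (by norm_num : (4 : ℝ) ≤ 5) ?_) ?_)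
  · positivity
  · ring

/-- Bound on the average direction
`d̄_v = (1/n) ∑ᵢ [∇₂Fᵢ(xᵢ, yᵢ) − ∇²₂₂fᵢ(xᵢ, yᵢ) vᵢ]`: under the stated Lipschitz
assumptions, with `‖v*‖ ≤ r_v`, `∇₂F(x̄, y*) = ∇²₂₂f(x̄, y*) v*`, `‖vᵢ‖ ≤ r_v`,
`‖d̄_v‖² ≤ (5(L_{F,1}+r_v L_{f,2})²/n) ∑ (‖xᵢ−x̄‖²+‖yᵢ−ȳ‖²) + (5L_{f,1}²/n) ∑ ‖vᵢ−v̄‖²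
  + 5(L_{F,1}+r_v L_{f,2})² ‖ȳ−y*‖² + 5L_{f,1}² ‖v̄−v*‖²`. -/
theorem sq_norm_dvbar_le {n p q : ℕ} (hn : 0 < n)
    (LF1 Lf1 Lf2 rv : ℝ)
    (hLF1 : 0 ≤ LF1) (hLf1 : 0 ≤ Lf1) (hLf2 : 0 ≤ Lf2) (hrv : 0 ≤ rv)
    (F f : Fin n → Vec p → Vec q → ℝ)
    (gF1 : Fin n → Vec p → Vec q → Vec p) (gF2 : Fin n → Vec p → Vec q → Vec q)
    (g1 : Fin n → Vec p → Vec q → Vec p) (g2 : Fin n → Vec p → Vec q → Vec q)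
    (f22 : Fin n → Vec p → Vec q → (Vec q →L[ℝ] Vec q))
    -- `gF1, gF2` are the partial gradients of `F i`, `g1, g2` those of `f i`
    (hgF1 : ∀ i x y, HasGradientAt (fun x' => F i x' y) (gF1 i x y) x)
    (hgF2 : ∀ i x y, HasGradientAt (fun y' => F i x y') (gF2 i x y) y)
    (hg1 : ∀ i x y, HasGradientAt (fun x' => f i x' y) (g1 i x y) x)
    (hg2 : ∀ i x y, HasGradientAt (fun y' => f i x y') (g2 i x y) y)
    -- `f22 i x y` is the Hessian of `f i` w.r.t. the second block
    (hf22 : ∀ i x y, HasFDerivAt (fun y' => g2 i x y') (f22 i x y) y)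
    -- `∇Fᵢ` is `L_{F,1}`-Lipschitz
    (hgFlip : ∀ i x y x' y',
      ‖gF1 i x y - gF1 i x' y'‖ ^ 2 + ‖gF2 i x y - gF2 i x' y'‖ ^ 2
        ≤ LF1 ^ 2 * (‖x - x'‖ ^ 2 + ‖y - y'‖ ^ 2))
    -- `∇fᵢ` is `L_{f,1}`-Lipschitz
    (hglip : ∀ i x y x' y',
      ‖g1 i x y - g1 i x' y'‖ ^ 2 + ‖g2 i x y - g2 i x' y'‖ ^ 2
        ≤ Lf1 ^ 2 * (‖x - x'‖ ^ 2 + ‖y - y'‖ ^ 2))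
    -- `∇²fᵢ` is `L_{f,2}`-Lipschitz
    (hf22lip : ∀ i x y x' y',
      ‖f22 i x y - f22 i x' y'‖ ≤ Lf2 * Real.sqrt (‖x - x'‖ ^ 2 + ‖y - y'‖ ^ 2))
    (X : Fin n → Vec p) (Y V : Fin n → Vec q)
    (xbar : Vec p) (hxbar : xbar = (n : ℝ)⁻¹ • ∑ i, X i)
    (ybar : Vec q) (hybar : ybar = (n : ℝ)⁻¹ • ∑ i, Y i)
    (vbar : Vec q) (hvbar : vbar = (n : ℝ)⁻¹ • ∑ i, V i)
    (hV : ∀ i, ‖V i‖ ≤ rv)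
    (ystar vstar : Vec q)
    (hvstar_norm : ‖vstar‖ ≤ rv)
    -- `∇₂F(x̄, y*) = ∇²₂₂f(x̄, y*) v*`, where `F = (1/n) ∑ Fᵢ`, `f = (1/n) ∑ fᵢ`
    (hsystem : (n : ℝ)⁻¹ • ∑ i, gF2 i xbar ystar
      = (n : ℝ)⁻¹ • ∑ i, (f22 i xbar ystar) vstar) :
    ‖(n : ℝ)⁻¹ • ∑ i, (gF2 i (X i) (Y i) - (f22 i (X i) (Y i)) (V i))‖ ^ 2
      ≤ 5 * (LF1 + rv * Lf2) ^ 2 / n * ∑ i, (‖X i - xbar‖ ^ 2 + ‖Y i - ybar‖ ^ 2)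
        + 5 * Lf1 ^ 2 / n * ∑ i, ‖V i - vbar‖ ^ 2
        + 5 * (LF1 + rv * Lf2) ^ 2 * ‖ybar - ystar‖ ^ 2
        + 5 * Lf1 ^ 2 * ‖vbar - vstar‖ ^ 2 :=
  sq_norm_dvbar_le_general LF1 Lf1 Lf2 rv hLF1 hLf1 hrv gF1 gF2 g1 g2 f22 hf22 hgFlip hglip hf22lip
    X Y V xbar ybar vbar hvbar hV ystar vstar hsystem
end
end

section
/- For each i = 1, …, n, let f_i : ℝ^p × ℝ^q → ℝ have L_{f,1}-Lipschitz gradient, set f := (1/n)Σ f_i, and suppose f(x̄, ·) is σ-strongly convex (σ > 0) for the given x̄ ∈ ℝ^p, with y* ∈ ℝ^q satisfying ∇₂f(x̄, y*) = 0. Let (x_i, y_i) be points with x̄ = (1/n)Σ x_i and ȳ := (1/n)Σ y_i, let 0 < β ≤ 2/(σ + L_{f,1}) with βσ ≤ 1, and set ȳ⁺ := ȳ − β·(1/n)Σ_{i=1}^n ∇₂f_i(x_i, y_i). Then ‖ȳ⁺ − y*‖² ≤ (1 − βσ/2)‖ȳ − y*‖² + (3βL_{f,1}²/(nσ)) Σ_{i=1}^n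 (‖x̄ − x_i‖² + ‖ȳ − y_i‖²). -/
noncomputable section

/-!
The point `ȳ⁺ - y*` is an exact gradient step of `h = f(x̄, ·)` from `ȳ`, minus `β` times the
error `e` made by evaluating `∇₂fᵢ` at `(xᵢ, yᵢ)` instead of `(x̄, ȳ)`. Since `h - (σ/2)‖·‖²` is
convex and `(L - σ)`-smooth, its gradient is cocoercive, which yields the classical inequality
`σL‖y - z‖² + ‖∇h y - ∇h z‖² ≤ (σ + L)⟪∇h y - ∇h z, y - z⟫` and with it the contraction factor
`1 - βσ` of the exact step. Young's inequality with weight `βσ/2` absorbs the error, where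
`‖e‖² ≤ (L²/n) ∑ᵢ (‖x̄ - xᵢ‖² + ‖ȳ - yᵢ‖²)` by Jensen and `(1 + 2/(βσ)) β² ≤ 3β/σ` as `βσ ≤ 1`.
-/

open Finset Set
open scoped RealInnerProductSpace

section Gradient

variable {E : Type*} [NormedAddCommGroup E] [InnerProductSpace ℝ E] [CompleteSpace E]
  {φ : E → ℝ} {G : E → E} {g y z : E}

theorem HasGradientAt.hasDerivAt_add_smul {d : E} {t : ℝ} (h : HasGradientAt φ g (y + t • d)) :
    HasDerivAt (fun s : ℝ => φ (y + s • d)) ⟪g, d⟫ t := by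
  have hline : HasDerivAt (fun s : ℝ => y + s • d) d t := by
    simpa using ((hasDerivAt_id t).smul_const d).const_add y
  simpa [Function.comp_def] using h.hasFDerivAt.comp_hasDerivAt t hline

theorem HasGradientAt.sub_half_mul_sq_norm (h : HasGradientAt φ g y) (σ : ℝ) :
    HasGradientAt (fun u => φ u - σ / 2 * ‖u‖ ^ 2) (g - σ • y) y := by
  rw [hasGradientAt_iff_hasFDerivAt] at h ⊢
  refine (h.sub ((hasStrictFDerivAt_norm_sq y).hasFDerivAt.const_mul (σ / 2))).congr_fderiv ?_
  ext v
  simp only [sub_apply, InnerProductSpace.toDual_apply_apply,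
    smul_apply, coe_innerSL_apply, nsmul_eq_mul, Nat.cast_ofNat, smul_eq_mul,
    map_sub, map_smul, sub_right_inj]
  ring

theorem HasGradientAt.const_mul (h : HasGradientAt φ g y) (c : ℝ) :
    HasGradientAt (fun u => c * φ u) (c • g) y := by
  rw [hasGradientAt_iff_hasFDerivAt, map_smul]
  exact h.hasFDerivAt.const_mul c

theorem HasGradientAt.sum {ι : Type*} {s : Finset ι} {φ : ι → E → ℝ} {g : ι → E}
    (h : ∀ i ∈ s, HasGradientAt (φ i) (g i) y) :
    HasGradientAt (fun u => ∑ i ∈ s, φ i u) (∑ i ∈ s, g i) y := by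
  rw [hasGradientAt_iff_hasFDerivAt, map_sum]
  exact HasFDerivAt.fun_sum fun i hi => (h i hi).hasFDerivAt

theorem ConvexOn.add_inner_le (hconv : ConvexOn ℝ univ φ) (hg : HasGradientAt φ g y) (z : E) :
    φ y + ⟪g, z - y⟫ ≤ φ z := by
  have hline : ConvexOn ℝ univ fun t : ℝ => φ (y + t • (z - y)) := by
    simpa [AffineMap.lineMap_apply, Function.comp_def, add_comm] using
      hconv.comp_affineMap (AffineMap.lineMap y z)
  have := hline.le_slope_of_hasDerivAt (mem_univ 0) (mem_univ 1) one_pos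
    (HasGradientAt.hasDerivAt_add_smul (by simpa using hg))
  simp only [slope_def_field, one_smul, add_sub_cancel, zero_smul, add_zero, sub_zero,
    div_one] at this
  linarith

/-- The descent lemma. -/
theorem le_add_inner_add_half_mul_sq {M : ℝ} (hG : ∀ u, HasGradientAt φ (G u) u)
    (hL : ∀ u, ‖G u - G y‖ ≤ M * ‖u - y‖) (z : E) :
    φ z ≤ φ y + ⟪G y, z - y⟫ + M / 2 * ‖z - y‖ ^ 2 := by
  set d := z - y
  let ψ : ℝ → ℝ := fun t => φ (y + t • d) - t * ⟪G y, d⟫ - M / 2 * ‖d‖ ^ 2 * t ^ 2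
  have hψ : ∀ t, HasDerivAt ψ (⟪G (y + t • d), d⟫ - ⟪G y, d⟫ - M * ‖d‖ ^ 2 * t) t := by
    intro t
    refine ((((hG _).hasDerivAt_add_smul).sub ((hasDerivAt_id t).mul_const ⟪G y, d⟫)).sub
      (((hasDerivAt_id t).pow 2).const_mul (M / 2 * ‖d‖ ^ 2))).congr_deriv ?_
    simp only [one_mul, Nat.cast_ofNat, id_eq, Nat.add_one_sub_one, pow_one, mul_one,
      sub_right_inj]
    ring
  have hanti : AntitoneOn ψ (Ici 0) := by
    refine antitoneOn_of_hasDerivWithinAt_nonpos (convex_Ici 0)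
      (fun t _ => (hψ t).continuousAt.continuousWithinAt)
      (fun t _ => (hψ t).hasDerivWithinAt) fun t ht => ?_
    rw [interior_Ici, Set.mem_Ioi] at ht
    have hlip : ‖G (y + t • d) - G y‖ ≤ M * (t * ‖d‖) := by
      simpa [norm_smul, abs_of_pos ht] using hL (y + t • d)
    have := real_inner_le_norm (G (y + t • d) - G y) d
    rw [inner_sub_left] at this
    nlinarith [mul_le_mul_of_nonneg_right hlip (norm_nonneg d)]
  have := hanti Set.self_mem_Ici (zero_le_one' ℝ) zero_le_one
  simp only [ψ, d, one_smul, add_sub_cancel, one_mul, one_pow, mul_one, zero_smul, add_zero,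
    zero_mul, sub_zero, zero_pow two_ne_zero, mul_zero] at this
  linarith

end Gradient

section Cocoercive

variable {E : Type*} [NormedAddCommGroup E] [InnerProductSpace ℝ E] {φ : E → ℝ} {G : E → E} {M : ℝ}

theorem le_mul_of_forall_quadratic_le {b c : ℝ} (hM : 0 ≤ M)
    (h : ∀ t : ℝ, (2 * t - M * t ^ 2) * b ≤ c) : b ≤ M * c := by
  rcases hM.eq_or_lt with rfl | hM
  · simp only [zero_mul, sub_zero] at h ⊢
    by_contra! hpos
    have := h ((c + 1) / (2 * b))
    rw [show 2 * ((c + 1) / (2 * b)) * b = c + 1 by field_simp] at this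
    linarith
  · have := h M⁻¹
    rw [show 2 * M⁻¹ - M * M⁻¹ ^ 2 = M⁻¹ by field_simp; ring, inv_mul_le_iff₀ hM] at this
    exact this

variable (hlow : ∀ y z, φ y + ⟪G y, z - y⟫ ≤ φ z)
  (hup : ∀ y z, φ z ≤ φ y + ⟪G y, z - y⟫ + M / 2 * ‖z - y‖ ^ 2)
include hlow hup

theorem add_inner_add_sq_norm_gradient_sub_le (y z : E) (t : ℝ) :
    φ y + ⟪G y, z - y⟫ + (t - M / 2 * t ^ 2) * ‖G z - G y‖ ^ 2 ≤ φ z := by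
  -- Bound `φ` at `z - t • (G z - G y)` from below at `y` and from above at `z`.
  set Δ := G z - G y
  have h₁ := hlow y (z - t • Δ)
  have h₂ := hup z (z - t • Δ)
  rw [show z - t • Δ - y = (z - y) - t • Δ by abel, inner_sub_right, real_inner_smul_right] at h₁
  rw [sub_sub_cancel_left, inner_neg_right, real_inner_smul_right, norm_neg, norm_smul,
    Real.norm_eq_abs, mul_pow, sq_abs] at h₂
  have hΔ : ⟪G z, Δ⟫ - ⟪G y, Δ⟫ = ‖Δ‖ ^ 2 := by
    rw [← inner_sub_left, real_inner_self_eq_norm_sq]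
  linear_combination h₁ + h₂ - t * hΔ

theorem sq_norm_sub_le_mul_inner (hM : 0 ≤ M) (y z : E) :
    ‖G y - G z‖ ^ 2 ≤ M * ⟪G y - G z, y - z⟫ := by
  refine le_mul_of_forall_quadratic_le hM fun t => ?_
  have h₁ := add_inner_add_sq_norm_gradient_sub_le hlow hup y z t
  have h₂ := add_inner_add_sq_norm_gradient_sub_le hlow hup z y t
  rw [norm_sub_rev (G z)] at h₁
  have : ⟪G y - G z, y - z⟫ = -(⟪G y, z - y⟫ + ⟪G z, y - z⟫) := by
    rw [inner_sub_left, ← neg_sub z y, inner_neg_right]; ring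
  rw [this]
  linarith

end Cocoercive

section GradientStep

variable {E : Type*} [NormedAddCommGroup E] [InnerProductSpace ℝ E] {σ L β : ℝ}

theorem norm_sub_smul_sq_le_of_le_inner {u v : E} (hσ : 0 < σ) (hσL : σ ≤ L) (hβ : 0 ≤ β)
    (hβL : β * (σ + L) ≤ 2) (h : σ * L * ‖u‖ ^ 2 + ‖v‖ ^ 2 ≤ (σ + L) * ⟪v, u⟫) :
    ‖u - β • v‖ ^ 2 ≤ (1 - β * σ) * ‖u‖ ^ 2 := by
  rw [norm_sub_sq_real, norm_smul, real_inner_smul_right, real_inner_comm, Real.norm_eq_abs,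
    mul_pow, sq_abs]
  refine le_of_mul_le_mul_left ?_ (by linarith : 0 < σ + L)
  nlinarith [mul_le_mul_of_nonneg_left h hβ, mul_nonneg (mul_nonneg hβ (sq_nonneg ‖v‖))
    (sub_nonneg.2 hβL), mul_nonneg (mul_nonneg (mul_nonneg hβ hσ.le) (sq_nonneg ‖u‖))
    (sub_nonneg.2 hσL)]

end GradientStep

section StronglyConvex

variable {E : Type*} [NormedAddCommGroup E] [InnerProductSpace ℝ E] [CompleteSpace E]
  {h : E → ℝ} {G : E → E} {σ L β : ℝ}

theorem mul_sq_norm_add_sq_norm_le_inner (hσL : σ ≤ L)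
    (hconv : ConvexOn ℝ univ fun u => h u - σ / 2 * ‖u‖ ^ 2)
    (hG : ∀ u, HasGradientAt h (G u) u) (hL : ∀ u v, ‖G u - G v‖ ≤ L * ‖u - v‖) (y z : E) :
    σ * L * ‖y - z‖ ^ 2 + ‖G y - G z‖ ^ 2 ≤ (σ + L) * ⟪G y - G z, y - z⟫ := by
  have hφ : ∀ u, HasGradientAt (fun u => h u - σ / 2 * ‖u‖ ^ 2) (G u - σ • u) u :=
    fun u => (hG u).sub_half_mul_sq_norm σ
  have hup : ∀ y z, h z - σ / 2 * ‖z‖ ^ 2 ≤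
      h y - σ / 2 * ‖y‖ ^ 2 + ⟪G y - σ • y, z - y⟫ + (L - σ) / 2 * ‖z - y‖ ^ 2 := by
    intro y z
    have hdesc := le_add_inner_add_half_mul_sq hG (fun u => hL u y) z
    have hsq := norm_add_sq_real y (z - y)
    rw [add_sub_cancel] at hsq
    rw [inner_sub_left, real_inner_smul_left]
    linear_combination hdesc - σ / 2 * hsq
  -- cocoercivity of the gradient of the convex, `(L - σ)`-smooth `h - (σ/2)‖·‖²`
  have hcoco := sq_norm_sub_le_mul_inner (fun y z => hconv.add_inner_le (hφ y) z) hup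
    (sub_nonneg.2 hσL) y z
  rw [show G y - σ • y - (G z - σ • z) = (G y - G z) - σ • (y - z) by rw [smul_sub]; abel,
    norm_sub_sq_real, real_inner_smul_right, inner_sub_left (G y - G z), real_inner_smul_left,
    real_inner_self_eq_norm_sq, norm_smul, Real.norm_eq_abs, mul_pow, sq_abs] at hcoco
  linear_combination hcoco

theorem norm_sub_smul_gradient_sub_sq_le (hσ : 0 < σ) (hβ : 0 ≤ β) (hβL : β * (σ + L) ≤ 2)
    (hβσ : β * σ ≤ 1) (hconv : ConvexOn ℝ univ fun u => h u - σ / 2 * ‖u‖ ^ 2)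
    (hG : ∀ u, HasGradientAt h (G u) u) (hL : ∀ u v, ‖G u - G v‖ ≤ L * ‖u - v‖) (y z : E) :
    ‖(y - z) - β • (G y - G z)‖ ^ 2 ≤ (1 - β * σ) * ‖y - z‖ ^ 2 := by
  have hL' : ∀ u v, ‖G u - G v‖ ≤ max L σ * ‖u - v‖ := fun u v =>
    (hL u v).trans (mul_le_mul_of_nonneg_right (le_max_left _ _) (norm_nonneg _))
  -- `L` may be smaller than `σ`; enlarging it to `max L σ` is harmless as `β * (σ + σ) ≤ 2`.
  have hβL' : β * (σ + max L σ) ≤ 2 := by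
    rcases max_cases L σ with ⟨hmax, _⟩ | ⟨hmax, _⟩ <;> rw [hmax] <;> linarith
  exact norm_sub_smul_sq_le_of_le_inner hσ (le_max_right _ _) hβ hβL'
    (mul_sq_norm_add_sq_norm_le_inner (le_max_right _ _) hconv hG hL' y z)

end StronglyConvex

section Perturbation

variable {E : Type*} [NormedAddCommGroup E] [InnerProductSpace ℝ E]

theorem norm_sub_sq_le_add_mul (u v : E) {t : ℝ} (ht : 0 < t) :
    ‖u - v‖ ^ 2 ≤ (1 + t) * ‖u‖ ^ 2 + (1 + t⁻¹) * ‖v‖ ^ 2 := by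
  have hexp : t⁻¹ * ‖t • u + v‖ ^ 2 = t * ‖u‖ ^ 2 + 2 * ⟪u, v⟫ + t⁻¹ * ‖v‖ ^ 2 := by
    rw [norm_add_sq_real, norm_smul, real_inner_smul_left, Real.norm_eq_abs, abs_of_pos ht]
    field_simp
  have : 0 ≤ t⁻¹ * ‖t • u + v‖ ^ 2 := by positivity
  rw [norm_sub_sq_real]
  linarith

theorem norm_sub_smul_sq_le_of_sq_le {u w e : E} {σ β ε : ℝ} (hσ : 0 < σ) (hβ : 0 < β)
    (hβσ : β * σ ≤ 1) (hu : ‖u‖ ^ 2 ≤ (1 - β * σ) * ‖w‖ ^ 2) (he : ‖e‖ ^ 2 ≤ ε) :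
    ‖u - β • e‖ ^ 2 ≤ (1 - β * σ / 2) * ‖w‖ ^ 2 + 3 * β / σ * ε := by
  have hyoung := norm_sub_sq_le_add_mul u (β • e) (by positivity : 0 < β * σ / 2)
  rw [norm_smul, Real.norm_eq_abs, mul_pow, sq_abs] at hyoung
  have hmain : (1 + β * σ / 2) * ‖u‖ ^ 2 ≤ (1 - β * σ / 2) * ‖w‖ ^ 2 := by
    nlinarith [mul_le_mul_of_nonneg_left hu (by positivity : 0 ≤ 1 + β * σ / 2),
      mul_nonneg (sq_nonneg (β * σ)) (sq_nonneg ‖w‖)]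
  have hcoef : (1 + (β * σ / 2)⁻¹) * β ^ 2 ≤ 3 * β / σ := by
    have hβ2 : β ^ 2 ≤ β / σ := by
      rw [le_div_iff₀ hσ]
      nlinarith
    calc (1 + (β * σ / 2)⁻¹) * β ^ 2 = β ^ 2 + 2 * β / σ := by field_simp
      _ ≤ β / σ + 2 * β / σ := by linarith
      _ = 3 * β / σ := by ring
  have herr : (1 + (β * σ / 2)⁻¹) * (β ^ 2 * ‖e‖ ^ 2) ≤ 3 * β / σ * ε := by
    rw [← mul_assoc]
    exact mul_le_mul hcoef he (sq_nonneg _) (by positivity)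
  linarith

end Perturbation

section Averages

open Fintype

variable {ι F : Type*} [SeminormedAddCommGroup F] [NormedSpace ℝ F]

theorem norm_inv_smul_sum_sq_le (s : Finset ι) (a : ι → F) :
    ‖(#s : ℝ)⁻¹ • ∑ i ∈ s, a i‖ ^ 2 ≤ (#s : ℝ)⁻¹ * ∑ i ∈ s, ‖a i‖ ^ 2 := by
  have hinv : ((#s : ℝ)⁻¹) ^ 2 * #s = (#s : ℝ)⁻¹ := by
    rcases eq_or_ne (#s : ℝ) 0 with h | h
    · simp [h]
    · field_simp
  calc ‖(#s : ℝ)⁻¹ • ∑ i ∈ s, a i‖ ^ 2 = ((#s : ℝ)⁻¹) ^ 2 * ‖∑ i ∈ s, a i‖ ^ 2 := by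
        rw [norm_smul, mul_pow, Real.norm_eq_abs, sq_abs]
    _ ≤ ((#s : ℝ)⁻¹) ^ 2 * (∑ i ∈ s, ‖a i‖) ^ 2 := by gcongr; exact norm_sum_le _ _
    _ ≤ ((#s : ℝ)⁻¹) ^ 2 * (#s * ∑ i ∈ s, ‖a i‖ ^ 2) := by
        gcongr; exact sq_sum_le_card_mul_sum_sq
    _ = (#s : ℝ)⁻¹ * ∑ i ∈ s, ‖a i‖ ^ 2 := by rw [← mul_assoc, hinv]

theorem norm_inv_smul_sum_sub_sq_le [Fintype ι] {E₁ E₂ : Type*} [SeminormedAddCommGroup E₁]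
    [SeminormedAddCommGroup E₂] {g : ι → E₁ → E₂ → F} {K : ℝ}
    (hg : ∀ i x y x' y', ‖g i x y - g i x' y'‖ ^ 2 ≤ K * (‖x - x'‖ ^ 2 + ‖y - y'‖ ^ 2))
    (x x' : ι → E₁) (y y' : ι → E₂) :
    ‖(card ι : ℝ)⁻¹ • ∑ i, g i (x i) (y i) - (card ι : ℝ)⁻¹ • ∑ i, g i (x' i) (y' i)‖ ^ 2
      ≤ K / card ι * ∑ i, (‖x i - x' i‖ ^ 2 + ‖y i - y' i‖ ^ 2) := by
  calc _ ≤ (card ι : ℝ)⁻¹ * ∑ i, ‖g i (x i) (y i) - g i (x' i) (y' i)‖ ^ 2 := by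
        simpa only [← smul_sub, ← sum_sub_distrib, card_univ] using norm_inv_smul_sum_sq_le univ _
    _ ≤ (card ι : ℝ)⁻¹ * ∑ i, K * (‖x i - x' i‖ ^ 2 + ‖y i - y' i‖ ^ 2) := by
        gcongr with i; exact hg ..
    _ = K / card ι * ∑ i, (‖x i - x' i‖ ^ 2 + ‖y i - y' i‖ ^ 2) := by
        rw [← mul_sum]; ring

end Averages

theorem ybar_contraction_general {n p q : ℕ} (hn : 0 < n)
    (σ Lf1 β : ℝ) (hσ : 0 < σ) (hLf1 : 0 ≤ Lf1)
    (hβ0 : 0 < β) (hβ : β ≤ 2 / (σ + Lf1)) (hβσ : β * σ ≤ 1)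
    (f : Fin n → Vec p → Vec q → ℝ)
    (g1 : Fin n → Vec p → Vec q → Vec p) (g2 : Fin n → Vec p → Vec q → Vec q)
    -- `g1, g2` are the partial gradients of `f i`
    (hg2 : ∀ i x y, HasGradientAt (fun y' => f i x y') (g2 i x y) y)
    -- `∇fᵢ` is `L_{f,1}`-Lipschitz
    (hglip : ∀ i x y x' y',
      ‖g1 i x y - g1 i x' y'‖ ^ 2 + ‖g2 i x y - g2 i x' y'‖ ^ 2
        ≤ Lf1 ^ 2 * (‖x - x'‖ ^ 2 + ‖y - y'‖ ^ 2))
    (X : Fin n → Vec p) (Y : Fin n → Vec q)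
    (xbar : Vec p)
    (ybar : Vec q)
    -- `f(x̄, ·)` is `σ`-strongly convex, i.e. `f(x̄, ·) − (σ/2)‖·‖²` is convex
    (hsc : ConvexOn ℝ Set.univ
      (fun y : Vec q => (n : ℝ)⁻¹ * ∑ i, f i xbar y - σ / 2 * ‖y‖ ^ 2))
    -- `y*` satisfies `∇₂f(x̄, y*) = 0`
    (ystar : Vec q) (hystar : (n : ℝ)⁻¹ • ∑ i, g2 i xbar ystar = 0)
    (yplus : Vec q)
    (hyplus : yplus = ybar - β • ((n : ℝ)⁻¹ • ∑ i, g2 i (X i) (Y i))) :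
    ‖yplus - ystar‖ ^ 2
      ≤ (1 - β * σ / 2) * ‖ybar - ystar‖ ^ 2
        + 3 * β * Lf1 ^ 2 / (n * σ) * ∑ i, (‖xbar - X i‖ ^ 2 + ‖ybar - Y i‖ ^ 2) := by
  have hn' : (0 : ℝ) < n := Nat.cast_pos.2 hn
  have hg2lip : ∀ i x y x' y', ‖g2 i x y - g2 i x' y'‖ ^ 2
      ≤ Lf1 ^ 2 * (‖x - x'‖ ^ 2 + ‖y - y'‖ ^ 2) := fun i x y x' y' =>
    le_of_add_le_of_nonneg_right (hglip i x y x' y') (sq_nonneg _)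
  have havg := norm_inv_smul_sum_sub_sq_le hg2lip
  simp only [Fintype.card_fin] at havg
  set G : Vec q → Vec q := fun y => (n : ℝ)⁻¹ • ∑ i, g2 i xbar y
  have hG : ∀ y, HasGradientAt (fun y => (n : ℝ)⁻¹ * ∑ i, f i xbar y) (G y) y := fun y =>
    (HasGradientAt.sum fun i _ => hg2 i xbar y).const_mul _
  have hGlip : ∀ u v, ‖G u - G v‖ ≤ Lf1 * ‖u - v‖ := by
    intro u v
    have := havg (fun _ => xbar) (fun _ => xbar) (fun _ => u) (fun _ => v)
    simp only [sub_self, norm_zero, sum_const, card_univ, Fintype.card_fin, nsmul_eq_mul] at this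
    refine (pow_le_pow_iff_left₀ (norm_nonneg _) (by positivity) two_ne_zero).1 (this.trans_eq ?_)
    field_simp
    ring
  have hstep := norm_sub_smul_gradient_sub_sq_le hσ hβ0.le
    ((le_div_iff₀ (by positivity)).1 hβ) hβσ hsc hG hGlip ybar ystar
  have herr := havg X (fun _ => xbar) Y (fun _ => ybar)
  simp only [norm_sub_rev (X _), norm_sub_rev (Y _)] at herr
  have hsplit : yplus - ystar = ((ybar - ystar) - β • (G ybar - G ystar))
      - β • ((n : ℝ)⁻¹ • ∑ i, g2 i (X i) (Y i) - G ybar) := by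
    rw [hyplus, show G ystar = 0 from hystar]
    module
  calc ‖yplus - ystar‖ ^ 2 ≤ (1 - β * σ / 2) * ‖ybar - ystar‖ ^ 2
        + 3 * β / σ * (Lf1 ^ 2 / n * ∑ i, (‖xbar - X i‖ ^ 2 + ‖ybar - Y i‖ ^ 2)) :=
      hsplit ▸ norm_sub_smul_sq_le_of_sq_le hσ hβ0 hβσ hstep herr
    _ = _ := by ring

/-- One-step contraction for the average lower-level iterate:
if `f = (1/n) ∑ fᵢ`, each `∇fᵢ` is `L_{f,1}`-Lipschitz, `f(x̄, ·)` is `σ`-strongly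
convex, `∇₂f(x̄, y*) = 0`, `0 < β ≤ 2/(σ + L_{f,1})`, `βσ ≤ 1`, and
`ȳ⁺ = ȳ − β (1/n) ∑ᵢ ∇₂fᵢ(xᵢ, yᵢ)`, then
`‖ȳ⁺ − y*‖² ≤ (1 − βσ/2) ‖ȳ − y*‖² + (3βL_{f,1}²/(nσ)) ∑ᵢ (‖x̄ − xᵢ‖² + ‖ȳ − yᵢ‖²)`. -/
theorem ybar_contraction {n p q : ℕ} (hn : 0 < n)
    (σ Lf1 β : ℝ) (hσ : 0 < σ) (hLf1 : 0 ≤ Lf1)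
    (hβ0 : 0 < β) (hβ : β ≤ 2 / (σ + Lf1)) (hβσ : β * σ ≤ 1)
    (f : Fin n → Vec p → Vec q → ℝ)
    (g1 : Fin n → Vec p → Vec q → Vec p) (g2 : Fin n → Vec p → Vec q → Vec q)
    -- `g1, g2` are the partial gradients of `f i`
    (hg1 : ∀ i x y, HasGradientAt (fun x' => f i x' y) (g1 i x y) x)
    (hg2 : ∀ i x y, HasGradientAt (fun y' => f i x y') (g2 i x y) y)
    -- `∇fᵢ` is `L_{f,1}`-Lipschitz
    (hglip : ∀ i x y x' y',
      ‖g1 i x y - g1 i x' y'‖ ^ 2 + ‖g2 i x y - g2 i x' y'‖ ^ 2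
        ≤ Lf1 ^ 2 * (‖x - x'‖ ^ 2 + ‖y - y'‖ ^ 2))
    (X : Fin n → Vec p) (Y : Fin n → Vec q)
    (xbar : Vec p) (hxbar : xbar = (n : ℝ)⁻¹ • ∑ i, X i)
    (ybar : Vec q) (hybar : ybar = (n : ℝ)⁻¹ • ∑ i, Y i)
    -- `f(x̄, ·)` is `σ`-strongly convex, i.e. `f(x̄, ·) − (σ/2)‖·‖²` is convex
    (hsc : ConvexOn ℝ Set.univ
      (fun y : Vec q => (n : ℝ)⁻¹ * ∑ i, f i xbar y - σ / 2 * ‖y‖ ^ 2))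
    -- `y*` satisfies `∇₂f(x̄, y*) = 0`
    (ystar : Vec q) (hystar : (n : ℝ)⁻¹ • ∑ i, g2 i xbar ystar = 0)
    (yplus : Vec q)
    (hyplus : yplus = ybar - β • ((n : ℝ)⁻¹ • ∑ i, g2 i (X i) (Y i))) :
    ‖yplus - ystar‖ ^ 2
      ≤ (1 - β * σ / 2) * ‖ybar - ystar‖ ^ 2
        + 3 * β * Lf1 ^ 2 / (n * σ) * ∑ i, (‖xbar - X i‖ ^ 2 + ‖ybar - Y i‖ ^ 2) :=
  ybar_contraction_general hn σ Lf1 β hσ hLf1 hβ0 hβ hβσ f g1 g2 hg2 hglip X Y xbar ybar hsc ystar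
    hystar yplus hyplus
end
end

section
/- Let f : ℝ^p × ℝ^q → ℝ be such that f(x, ·) is σ-strongly convex for every x ∈ ℝ^p (σ > 0) and ∇f is L_{f,1}-Lipschitz, and let y* : ℝ^p → ℝ^q satisfy ∇₂f(x, y*(x)) = 0 for all x. Then y* is Lipschitz continuous with constant L_{f,1}/σ, i.e. ‖y*(x) − y*(x')‖ ≤ (L_{f,1}/σ)‖x − x'‖ for all x, x' ∈ ℝ^p. -/
/-!
Strong convexity of `f x` makes its gradient `g2 x` strongly monotone,
`σ ‖y - y'‖² ≤ ⟪g2 x y - g2 x y', y - y'⟫`: restricted to the segment `[y', y]`, the convex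
function `f x - σ/2 ‖·‖²` has a nondecreasing derivative. Take `y = y*(x)` and `y' = y*(x')`.
Since `g2 x (y*(x)) = 0 = g2 x' (y*(x'))`, the right side is at most
`‖g2 x y' - g2 x' y'‖ ‖y - y'‖ ≤ L_{f,1} ‖x - x'‖ ‖y - y'‖`; divide by `σ ‖y - y'‖`.
-/

noncomputable section

open InnerProductSpace RealInnerProductSpace

section
variable {E : Type*} [NormedAddCommGroup E] [InnerProductSpace ℝ E]

theorem ConvexOn.hasFDerivAt_apply_sub_le {φ : E → ℝ} {φ' : E → E →L[ℝ] ℝ}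
    (hφ : ConvexOn ℝ Set.univ φ) (hφ' : ∀ x, HasFDerivAt φ (φ' x) x) (x y : E) :
    φ' x (y - x) ≤ φ' y (y - x) := by
  let ℓ : ℝ →ᵃ[ℝ] E := AffineMap.lineMap x y
  have hline : ConvexOn ℝ Set.univ (φ ∘ ℓ) := by simpa using hφ.comp_affineMap ℓ
  have hderiv (t : ℝ) : HasDerivAt (φ ∘ ℓ) (φ' (ℓ t) (y - x)) t :=
    (hφ' _).comp_hasDerivAt t AffineMap.hasDerivAt_lineMap
  have h0 := hline.le_slope_of_hasDerivAt (Set.mem_univ 0) (Set.mem_univ 1) one_pos (hderiv 0)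
  have h1 := hline.slope_le_of_hasDerivAt (Set.mem_univ 0) (Set.mem_univ 1) one_pos (hderiv 1)
  simpa [ℓ] using h0.trans h1

theorem StrongConvexOn.mul_norm_sub_sq_le_inner_sub [CompleteSpace E] {m : ℝ} {f : E → ℝ}
    {f' : E → E} (hf : StrongConvexOn Set.univ m f) (hf' : ∀ x, HasGradientAt f (f' x) x)
    (x y : E) : m * ‖y - x‖ ^ 2 ≤ ⟪f' y - f' x, y - x⟫ := by
  have hderiv (z : E) : HasFDerivAt (fun z => f z - m / 2 * ‖z‖ ^ 2)
      (toDual ℝ E (f' z) - (m / 2) • (2 • innerSL ℝ z)) z :=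
    (hf' z).hasFDerivAt.sub ((hasStrictFDerivAt_norm_sq z).hasFDerivAt.const_mul (m / 2))
  have hmono := (strongConvexOn_iff_convex.mp hf).hasFDerivAt_apply_sub_le hderiv x y
  simp only [sub_apply, smul_apply, toDual_apply_apply,
    innerSL_apply_apply, smul_eq_mul, nsmul_eq_mul] at hmono
  rw [← real_inner_self_eq_norm_sq, inner_sub_left, inner_sub_left]
  push_cast at hmono
  linarith

theorem norm_le_norm_div_of_mul_norm_sq_le_inner {m : ℝ} (hm : 0 < m) {u v : E}
    (h : m * ‖u‖ ^ 2 ≤ ⟪v, u⟫) : ‖u‖ ≤ ‖v‖ / m := by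
  rcases (norm_nonneg u).eq_or_lt with hu | hu
  · rw [← hu]; positivity
  · rw [le_div_iff₀ hm, mul_comm]
    refine le_of_mul_le_mul_right ?_ hu
    calc m * ‖u‖ * ‖u‖ = m * ‖u‖ ^ 2 := by ring
      _ ≤ ⟪v, u⟫ := h
      _ ≤ ‖v‖ * ‖u‖ := real_inner_le_norm v u

end

theorem ystar_lipschitz_general {p q : ℕ}
    (σ Lf1 : ℝ) (hσ : 0 < σ) (hLf1 : 0 ≤ Lf1)
    (f : Vec p → Vec q → ℝ)
    (g1 : Vec p → Vec q → Vec p) (g2 : Vec p → Vec q → Vec q)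
    -- `g1, g2` are the partial gradients of `f`
    (hg2 : ∀ x y, HasGradientAt (fun y' => f x y') (g2 x y) y)
    -- `∇f` is `L_{f,1}`-Lipschitz (w.r.t. the Euclidean norm on the product)
    (hglip : ∀ x y x' y',
      ‖g1 x y - g1 x' y'‖ ^ 2 + ‖g2 x y - g2 x' y'‖ ^ 2
        ≤ Lf1 ^ 2 * (‖x - x'‖ ^ 2 + ‖y - y'‖ ^ 2))
    -- `f(x, ·)` is `σ`-strongly convex for every `x`
    (hsc : ∀ x, ConvexOn ℝ Set.univ (fun y : Vec q => f x y - σ / 2 * ‖y‖ ^ 2))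
    -- `y*` satisfies `∇₂f(x, y*(x)) = 0` for all `x`
    (ystar : Vec p → Vec q) (hystar : ∀ x, g2 x (ystar x) = 0) :
    ∀ x x', ‖ystar x - ystar x'‖ ≤ Lf1 / σ * ‖x - x'‖ := by
  intro x x'
  have hmono := (strongConvexOn_iff_convex.mpr (hsc x)).mul_norm_sub_sq_le_inner_sub (hg2 x)
    (ystar x') (ystar x)
  have hpartial : ‖g2 x (ystar x') - g2 x' (ystar x')‖ ≤ Lf1 * ‖x - x'‖ := by
    have h := hglip x (ystar x') x' (ystar x')
    rw [sub_self, norm_zero] at h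
    refine (pow_le_pow_iff_left₀ (norm_nonneg _) (by positivity) two_ne_zero).mp ?_
    nlinarith [sq_nonneg ‖g1 x (ystar x') - g1 x' (ystar x')‖]
  calc ‖ystar x - ystar x'‖ ≤ ‖g2 x (ystar x) - g2 x (ystar x')‖ / σ :=
        norm_le_norm_div_of_mul_norm_sq_le_inner hσ hmono
    _ = ‖g2 x (ystar x') - g2 x' (ystar x')‖ / σ := by simp [hystar]
    _ ≤ Lf1 * ‖x - x'‖ / σ := by gcongr
    _ = Lf1 / σ * ‖x - x'‖ := by ring

/-- If `f(x, ·)` is `σ`-strongly convex for every `x`, `∇f` is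
`L_{f,1}`-Lipschitz and `∇₂f(x, y*(x)) = 0` for all `x`, then `y*` is
`(L_{f,1}/σ)`-Lipschitz. -/
theorem ystar_lipschitz {p q : ℕ}
    (σ Lf1 : ℝ) (hσ : 0 < σ) (hLf1 : 0 ≤ Lf1)
    (f : Vec p → Vec q → ℝ)
    (g1 : Vec p → Vec q → Vec p) (g2 : Vec p → Vec q → Vec q)
    -- `g1, g2` are the partial gradients of `f`
    (hg1 : ∀ x y, HasGradientAt (fun x' => f x' y) (g1 x y) x)
    (hg2 : ∀ x y, HasGradientAt (fun y' => f x y') (g2 x y) y)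
    -- `∇f` is `L_{f,1}`-Lipschitz (w.r.t. the Euclidean norm on the product)
    (hglip : ∀ x y x' y',
      ‖g1 x y - g1 x' y'‖ ^ 2 + ‖g2 x y - g2 x' y'‖ ^ 2
        ≤ Lf1 ^ 2 * (‖x - x'‖ ^ 2 + ‖y - y'‖ ^ 2))
    -- `f(x, ·)` is `σ`-strongly convex for every `x`
    (hsc : ∀ x, ConvexOn ℝ Set.univ (fun y : Vec q => f x y - σ / 2 * ‖y‖ ^ 2))
    -- `y*` satisfies `∇₂f(x, y*(x)) = 0` for all `x`
    (ystar : Vec p → Vec q) (hystar : ∀ x, g2 x (ystar x) = 0) :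
    ∀ x x', ‖ystar x - ystar x'‖ ≤ Lf1 / σ * ‖x - x'‖ :=
  ystar_lipschitz_general σ Lf1 hσ hLf1 f g1 g2 hg2 hglip hsc ystar hystar
end
end
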